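/- arXiv:1303.1654 — 6 statements merged into one kernel-verified Lean document; each statement's English description precedes it below -/
import Mathlib

section
/- Let A be a unital C*-algebra, L ∈ A, and define ℒ(X) = (1/2)·L*·(X·L − L·X) + (1/2)·(L*·X − X·L*)·L and 𝒢(X) = −i·[X, H₁ + H₂] + ℒ(X). Let H₁, H₂, V, W ∈ A be self-adjoint with V ≥ 0 and H₂ ≥ 0, let z, w : Fin m → A, and let θ ≥ 0, γ > 0, β ≥ 0, λ̃ ∈ ℝ. Assume: (a) [V − θH₁, H₂] = Σᵢ [V − θH₁, zᵢ*]·wᵢ − Σᵢ wᵢ*·[zᵢ, V − θH₁]; (b) ℒ(H₂) ≤ Σᵢ ℒ(zᵢ*)·wᵢ + Σᵢ wᵢ*·ℒ(zᵢ) + β·Σᵢ [zᵢ,L]*·[zᵢ,L]; (c) Σᵢ (wᵢ − zᵢ/γ)*·(wᵢ − zᵢ/γ) ≤ (1/γ²)·Σᵢ zᵢ*·zᵢ; and (d) −i[V,H₁] + ℒ(V) + (1/γ)·Σᵢ (i[zᵢ, V − θH₁] + θℒ(zᵢ) + zᵢ)*·(i[zᵢ, V − θH₁] + θℒ(zᵢ)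 + zᵢ) + θβ·Σᵢ [zᵢ,L]*·[zᵢ,L] + W ≤ λ̃·1. Then 𝒢(V + θH₂) + W ≤ λ̃·1. -/
/-!
With `P = V - θ H₁` and `aᵢ = i[zᵢ, P] + θ ℒ(zᵢ) + zᵢ`, the part of `𝒢(V + θH₂)` involving `H₂`
is `-i[P, H₂] + θ ℒ(H₂)`, which (a) and (b) bound by
`θβ ∑ [zᵢ,L]*[zᵢ,L] + ∑ (aᵢ* wᵢ + wᵢ* aᵢ) - ∑ (zᵢ* wᵢ + wᵢ* zᵢ)`.
Completing the square gives `aᵢ* wᵢ + wᵢ* aᵢ ≤ γ⁻¹ aᵢ* aᵢ + γ wᵢ* wᵢ`, and the sector bound (c)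
is equivalent to `γ ∑ wᵢ* wᵢ ≤ ∑ (zᵢ* wᵢ + wᵢ* zᵢ)`, so what is left is the left side of (d).
-/

open Complex

section StarOrdered

variable {A : Type*} [NonUnitalRing A] [StarRing A] [Module ℝ A] [StarModule ℝ A]
  [IsScalarTower ℝ A A] [SMulCommClass ℝ A A]

theorem star_sub_smul_mul_sub_smul (w z : A) (c : ℝ) :
    star (w - c • z) * (w - c • z)
      = star w * w - c • (star z * w + star w * z) + c ^ 2 • (star z * z) := by
  simp only [star_sub, star_smul, star_trivial, sub_mul, mul_sub, smul_mul_assoc, mul_smul_comm,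
    smul_sub, smul_add, smul_smul]
  module

variable [PartialOrder A] [StarOrderedRing A]

theorem star_mul_add_star_mul_le (x y : A) {t : ℝ} (ht : 0 < t) :
    star x * y + star y * x ≤ t⁻¹ • (star x * x) + t • (star y * y) := by
  have hsq : 0 ≤ t⁻¹ • (star (t • y - x) * (t • y - x)) :=
    smul_nonneg (inv_nonneg.mpr ht.le) (star_mul_self_nonneg _)
  have hexp : t⁻¹ • (star (t • y - x) * (t • y - x))
      = t⁻¹ • (star x * x) + t • (star y * y) - (star x * y + star y * x) := by
    simp only [star_sub, star_smul, star_trivial, sub_mul, mul_sub, smul_mul_assoc, mul_smul_comm,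
      smul_sub, smul_smul]
    match_scalars <;> field_simp
  rwa [hexp, sub_nonneg] at hsq

variable {ι : Type*} {s : Finset ι}

theorem smul_sum_star_mul_self_le_of_sector {w z : ι → A} {γ : ℝ} (hγ : 0 < γ)
    (hc : ∑ i ∈ s, star (w i - γ⁻¹ • z i) * (w i - γ⁻¹ • z i)
      ≤ (γ ^ 2)⁻¹ • ∑ i ∈ s, star (z i) * z i) :
    γ • ∑ i ∈ s, star (w i) * w i ≤ ∑ i ∈ s, (star (z i) * w i + star (w i) * z i) := by
  simp only [star_sub_smul_mul_sub_smul, Finset.sum_add_distrib, Finset.sum_sub_distrib,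
    ← Finset.smul_sum, inv_pow, add_le_iff_nonpos_left, sub_nonpos] at hc
  calc γ • ∑ i ∈ s, star (w i) * w i
      ≤ γ • γ⁻¹ • (∑ i ∈ s, star (z i) * w i + ∑ i ∈ s, star (w i) * z i) :=
        smul_le_smul_of_nonneg_left hc hγ.le
    _ = _ := by rw [smul_inv_smul₀ hγ.ne', Finset.sum_add_distrib]

theorem sum_star_mul_add_sub_le_of_sector {a w z : ι → A} {γ : ℝ} (hγ : 0 < γ)
    (hc : ∑ i ∈ s, star (w i - γ⁻¹ • z i) * (w i - γ⁻¹ • z i)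
      ≤ (γ ^ 2)⁻¹ • ∑ i ∈ s, star (z i) * z i) :
    ∑ i ∈ s, (star (a i) * w i + star (w i) * a i)
        - ∑ i ∈ s, (star (z i) * w i + star (w i) * z i)
      ≤ γ⁻¹ • ∑ i ∈ s, star (a i) * a i := by
  have hsq : ∑ i ∈ s, (star (a i) * w i + star (w i) * a i)
      ≤ γ⁻¹ • ∑ i ∈ s, star (a i) * a i + γ • ∑ i ∈ s, star (w i) * w i := by
    rw [Finset.smul_sum, Finset.smul_sum, ← Finset.sum_add_distrib]
    exact Finset.sum_le_sum fun i _ ↦ star_mul_add_star_mul_le (a i) (w i) hγ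
  rw [sub_le_iff_le_add]
  exact hsq.trans (by gcongr; exact smul_sum_star_mul_self_le_of_sector hγ hc)

end StarOrdered

section Lindblad

variable {A : Type*} [NonUnitalRing A] [StarRing A] [Module ℂ A]

noncomputable def lindblad (L X : A) : A :=
  (1 / 2 : ℂ) • (star L * (X * L - L * X)) + (1 / 2 : ℂ) • ((star L * X - X * star L) * L)

noncomputable def generator (H L X : A) : A := (-I) • (X * H - H * X) + lindblad L X

theorem lindblad_star [StarModule ℂ A] (L X : A) : lindblad L (star X) = star (lindblad L X) := by
  simp only [lindblad, star_add, star_smul, star_mul, star_sub, star_star, Complex.star_def,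
    map_div₀, map_one, map_ofNat, mul_sub, sub_mul, mul_assoc]
  module

variable [IsScalarTower ℂ A A] [SMulCommClass ℂ A A]

theorem generator_add_add_smul (H₁ H₂ L V : A) (θ : ℝ) :
    generator (H₁ + H₂) L (V + θ • H₂)
      = generator H₁ L V
        + ((-I) • ((V - θ • H₁) * H₂ - H₂ * (V - θ • H₁)) + θ • lindblad L H₂) := by
  simp only [generator, lindblad, mul_add, add_mul, mul_sub, sub_mul, smul_add, smul_sub,
    smul_mul_assoc, mul_smul_comm]
  module

theorem popov_cross_term_expand [StarModule ℂ A] {P : A} (hP : IsSelfAdjoint P) (L z w : A)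
    (θ : ℝ) :
    star (I • (z * P - P * z) + θ • lindblad L z + z) * w
        + star w * (I • (z * P - P * z) + θ • lindblad L z + z)
      = (-I) • ((P * star z - star z * P) * w - star w * (z * P - P * z))
        + θ • (lindblad L (star z) * w + star w * lindblad L z)
        + (star z * w + star w * z) := by
  simp only [star_add, star_smul, star_sub, star_mul, hP.star_eq, Complex.star_def,
    Complex.conj_I, star_trivial, ← lindblad_star, add_mul, sub_mul, mul_add, mul_sub,
    smul_mul_assoc, mul_smul_comm, smul_add, smul_sub]
  module

end Lindblad

theorem popov_dissipation_inequality_general {A : Type*} [CStarAlgebra A]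
    [PartialOrder A] [StarOrderedRing A] {m : ℕ}
    (L H₁ H₂ V W : A)
    (hH₁ : IsSelfAdjoint H₁) (hV : IsSelfAdjoint V)
    (z w : Fin m → A) (θ γ β lam : ℝ)
    (hθ : 0 ≤ θ) (hγ : 0 < γ)
    (ℒ : A → A)
    (hℒ : ∀ X : A, ℒ X = (1 / 2 : ℂ) • (star L * (X * L - L * X)) +
        (1 / 2 : ℂ) • ((star L * X - X * star L) * L))
    (𝒢 : A → A)
    (h𝒢 : ∀ X : A, 𝒢 X = (-Complex.I) • (X * (H₁ + H₂) - (H₁ + H₂) * X) + ℒ X)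
    -- (a) commutator decomposition
    (ha : (V - (θ : ℂ) • H₁) * H₂ - H₂ * (V - (θ : ℂ) • H₁)
        = ∑ i, ((V - (θ : ℂ) • H₁) * star (z i) - star (z i) * (V - (θ : ℂ) • H₁)) * w i
          - ∑ i, star (w i) * (z i * (V - (θ : ℂ) • H₁) - (V - (θ : ℂ) • H₁) * z i))
    -- (b) bound on ℒ(H₂)
    (hb : ℒ H₂ ≤ ∑ i, ℒ (star (z i)) * w i + ∑ i, star (w i) * ℒ (z i)
          + (β : ℂ) • ∑ i, star (z i * L - L * z i) * (z i * L - L * z i))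
    -- (c) sector bound
    (hc : ∑ i, star (w i - ((1 / γ : ℝ) : ℂ) • z i) * (w i - ((1 / γ : ℝ) : ℂ) • z i)
          ≤ ((1 / γ ^ 2 : ℝ) : ℂ) • ∑ i, star (z i) * z i)
    -- (d) Popov-type dissipation inequality
    (hd : (-Complex.I) • (V * H₁ - H₁ * V) + ℒ V
          + ((1 / γ : ℝ) : ℂ) • ∑ i,
              star (Complex.I • (z i * (V - (θ : ℂ) • H₁) - (V - (θ : ℂ) • H₁) * z i)
                      + (θ : ℂ) • ℒ (z i) + z i)
                * (Complex.I • (z i * (V - (θ : ℂ) • H₁) - (V - (θ : ℂ) • H₁) * z i)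
                      + (θ : ℂ) • ℒ (z i) + z i)
          + ((θ * β : ℝ) : ℂ) • ∑ i, star (z i * L - L * z i) * (z i * L - L * z i)
          + W ≤ (lam : ℂ) • (1 : A)) :
    𝒢 (V + (θ : ℂ) • H₂) + W ≤ (lam : ℂ) • (1 : A) := by
  obtain rfl : ℒ = lindblad L := funext hℒ
  obtain rfl : 𝒢 = generator (H₁ + H₂) L := funext h𝒢
  simp only [Complex.coe_smul, one_div] at ha hb hc hd ⊢
  set P := V - θ • H₁
  have hP : IsSelfAdjoint P := hV.sub ((IsSelfAdjoint.all θ).smul hH₁)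
  set a : Fin m → A := fun i ↦ I • (z i * P - P * z i) + θ • lindblad L (z i) + z i
  set K := ∑ i, star (z i * L - L * z i) * (z i * L - L * z i)
  have hcross : ∑ i, (star (a i) * w i + star (w i) * a i)
      = (-I) • (P * H₂ - H₂ * P)
        + θ • (∑ i, lindblad L (star (z i)) * w i + ∑ i, star (w i) * lindblad L (z i))
        + ∑ i, (star (z i) * w i + star (w i) * z i) := by
    rw [Finset.sum_congr rfl fun i _ ↦ popov_cross_term_expand hP L (z i) (w i) θ]
    simp only [ha, Finset.sum_add_distrib, Finset.sum_sub_distrib, ← Finset.smul_sum]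
  calc generator (H₁ + H₂) L (V + θ • H₂) + W
      = generator H₁ L V + W + ((-I) • (P * H₂ - H₂ * P) + θ • lindblad L H₂) := by
        rw [generator_add_add_smul]; abel
    _ ≤ generator H₁ L V + W + ((-I) • (P * H₂ - H₂ * P)
          + θ • (∑ i, lindblad L (star (z i)) * w i + ∑ i, star (w i) * lindblad L (z i)
            + β • K)) := by gcongr
    _ = generator H₁ L V + W + (θ * β) • K
          + (∑ i, (star (a i) * w i + star (w i) * a i)
            - ∑ i, (star (z i) * w i + star (w i) * z i)) := by
        rw [hcross]; module
    _ ≤ generator H₁ L V + W + (θ * β) • K + γ⁻¹ • ∑ i, star (a i) * a i := by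
        gcongr; exact sum_star_mul_add_sub_le_of_sector hγ hc
    _ ≤ lam • 1 := by
        convert hd using 1; simp only [generator]; abel

/-- Algebraic core of Theorem 1 of the paper (the Popov-type stability
result): under the commutator decomposition (a),(b) defining the uncertainty
set 𝒲₁, the sector bound (c), and the Popov-type dissipation inequality (d),
the quantum dissipation inequality `𝒢(V + θH₂) + W ≤ λ̃·1` holds. -/
theorem popov_dissipation_inequality {A : Type*} [CStarAlgebra A]
    [PartialOrder A] [StarOrderedRing A] {m : ℕ}
    (L H₁ H₂ V W : A)
    (hH₁ : IsSelfAdjoint H₁) (hH₂ : IsSelfAdjoint H₂)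
    (hV : IsSelfAdjoint V) (hW : IsSelfAdjoint W)
    (hVnonneg : (0 : A) ≤ V) (hH₂nonneg : (0 : A) ≤ H₂)
    (z w : Fin m → A) (θ γ β lam : ℝ)
    (hθ : 0 ≤ θ) (hγ : 0 < γ) (hβ : 0 ≤ β)
    (ℒ : A → A)
    (hℒ : ∀ X : A, ℒ X = (1 / 2 : ℂ) • (star L * (X * L - L * X)) +
        (1 / 2 : ℂ) • ((star L * X - X * star L) * L))
    (𝒢 : A → A)
    (h𝒢 : ∀ X : A, 𝒢 X = (-Complex.I) • (X * (H₁ + H₂) - (H₁ + H₂) * X) + ℒ X)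
    -- (a) commutator decomposition
    (ha : (V - (θ : ℂ) • H₁) * H₂ - H₂ * (V - (θ : ℂ) • H₁)
        = ∑ i, ((V - (θ : ℂ) • H₁) * star (z i) - star (z i) * (V - (θ : ℂ) • H₁)) * w i
          - ∑ i, star (w i) * (z i * (V - (θ : ℂ) • H₁) - (V - (θ : ℂ) • H₁) * z i))
    -- (b) bound on ℒ(H₂)
    (hb : ℒ H₂ ≤ ∑ i, ℒ (star (z i)) * w i + ∑ i, star (w i) * ℒ (z i)
          + (β : ℂ) • ∑ i, star (z i * L - L * z i) * (z i * L - L * z i))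
    -- (c) sector bound
    (hc : ∑ i, star (w i - ((1 / γ : ℝ) : ℂ) • z i) * (w i - ((1 / γ : ℝ) : ℂ) • z i)
          ≤ ((1 / γ ^ 2 : ℝ) : ℂ) • ∑ i, star (z i) * z i)
    -- (d) Popov-type dissipation inequality
    (hd : (-Complex.I) • (V * H₁ - H₁ * V) + ℒ V
          + ((1 / γ : ℝ) : ℂ) • ∑ i,
              star (Complex.I • (z i * (V - (θ : ℂ) • H₁) - (V - (θ : ℂ) • H₁) * z i)
                      + (θ : ℂ) • ℒ (z i) + z i)
                * (Complex.I • (z i * (V - (θ : ℂ) • H₁) - (V - (θ : ℂ) • H₁) * z i)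
                      + (θ : ℂ) • ℒ (z i) + z i)
          + ((θ * β : ℝ) : ℂ) • ∑ i, star (z i * L - L * z i) * (z i * L - L * z i)
          + W ≤ (lam : ℂ) • (1 : A)) :
    𝒢 (V + (θ : ℂ) • H₂) + W ≤ (lam : ℂ) • (1 : A) :=
  popov_dissipation_inequality_general L H₁ H₂ V W hH₁ hV z w θ γ β lam hθ hγ ℒ hℒ 𝒢 h𝒢 ha hb hc hd
end

section
/- Let A be a unital star algebra over ℂ, z : Fin m → A, and let Δ be an m×m complex Hermitian matrix. Define w : Fin m → A by wᵢ = (1/2)·Σⱼ Δᵢⱼ·zⱼ and H₂ = (1/2)·Σᵢⱼ zᵢ*·Δᵢⱼ·zⱼ. Then for every Ṽ ∈ A: [Ṽ, H₂] = Σᵢ [Ṽ, zᵢ*]·wᵢ − Σᵢ wᵢ*·[zᵢ, Ṽ], where [X,Y] = XY − YX. -/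
/-- The commutator decomposition identity from Lemma 3 of the paper: for the
quadratic perturbation Hamiltonian `H₂ = (1/2)·z†Δz` with Hermitian `Δ` and
`w = (1/2)·Δz`, one has `[Vt, H₂] = Σᵢ [Vt, zᵢ*]·wᵢ − Σᵢ wᵢ*·[zᵢ, Vt]`. -/
theorem quadratic_commutator_decomposition {A : Type*} [Ring A] [StarRing A]
    [Algebra ℂ A] [StarModule ℂ A] {m : ℕ}
    (z : Fin m → A) (Δ : Matrix (Fin m) (Fin m) ℂ) (hΔ : Δ.IsHermitian)
    (w : Fin m → A) (hw : ∀ i, w i = (1 / 2 : ℂ) • ∑ j, Δ i j • z j)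
    (H₂ : A) (hH₂ : H₂ = (1 / 2 : ℂ) • ∑ i, ∑ j, star (z i) * (Δ i j • z j)) :
    ∀ Vt : A, Vt * H₂ - H₂ * Vt
      = ∑ i, (Vt * star (z i) - star (z i) * Vt) * w i
        - ∑ i, star (w i) * (z i * Vt - Vt * z i) := by
  intro Vt
  subst hH₂
  have hΔ' : ∀ i j, star (Δ i j) = Δ j i := fun i j => congrFun (congrFun hΔ j) i
  simp only [hw, star_smul, star_sum, Finset.mul_sum, Finset.sum_mul,
    Finset.smul_sum, mul_smul_comm, smul_mul_assoc, star_mul', hΔ',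
    sub_mul, mul_sub, smul_sub, star_one, one_div, star_inv₀]
  rw [show ((star (2:ℂ))⁻¹ : ℂ) = (2:ℂ)⁻¹ by norm_num]
  have key : ∑ x : Fin m, (∑ y : Fin m, (2:ℂ)⁻¹ • Δ y x • (star (z y) * (z x * Vt))
        - ∑ y : Fin m, (2:ℂ)⁻¹ • Δ y x • (star (z y) * (Vt * z x)))
      = ∑ x : Fin m, ∑ y : Fin m, ((2:ℂ)⁻¹ • Δ x y • (star (z x) * (z y * Vt))
        - (2:ℂ)⁻¹ • Δ x y • (star (z x) * (Vt * z y))) := by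
    simp only [← Finset.sum_sub_distrib]
    rw [Finset.sum_comm]
  rw [key]
  simp only [← Finset.sum_sub_distrib]
  apply Finset.sum_congr rfl
  intro i _
  apply Finset.sum_congr rfl
  intro j _
  simp only [smul_smul, mul_assoc]
  abel
end

section
/- Let A be a unital star algebra over ℂ and a : Fin n → A satisfy the canonical commutation relations aᵢ·aⱼ = aⱼ·aᵢ and aᵢ·(aⱼ)* − (aⱼ)*·aᵢ = δᵢⱼ·1 for all i, j. Let x : Fin n ⊕ Fin n → A be the doubled vector x = (a, a#), i.e. x(inl i) = aᵢ and x(inr i) = (aᵢ)*. Let P and M be 2n×2n complex Hermitian matrices of doubled form, i.e. P = [[P₁,P₂],[P₂#,P₁#]] and M = [[M₁,M₂],[M₂#,M₁#]] with P₁,M₁ Hermitian and P₂,M₂ symmetric, and let J = diag(I, −I). Then [x†Px, (1/2)·x†Mx] = x†(PJM − MJP)x, where x†Kx denotes Σᵢⱼ x(i)*·Kᵢⱼ·x(j) and [X,Y] = XY − YX. -/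
open Matrix

private lemma comm4 {A : Type*} [Ring A] [Algebra ℂ A]
    (u v w z : A) (cuw cvw cvz cuz : ℂ)
    (huw : u * w = w * u + cuw • (1 : A))
    (hvw : v * w = w * v + cvw • (1 : A))
    (hvz : v * z = z * v + cvz • (1 : A))
    (huz : u * z = z * u + cuz • (1 : A)) :
    u * v * (w * z) - w * z * (u * v)
      = cuw • (v * z) + cvw • (u * z) + cvz • (w * u) + cuz • (w * v) := by
  have huz' : z * u = u * z - cuz • (1 : A) := by rw [huz]; abel
  have hvz' : z * v = v * z - cvz • (1 : A) := by rw [hvz]; abel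
  have h1 : u * v * (w * z) = w * u * (v * z) + cuw • (v * z) + cvw • (u * z) := by
    calc u * v * (w * z) = u * (v * w) * z := by simp [mul_assoc]
      _ = u * (w * v + cvw • (1 : A)) * z := by rw [hvw]
      _ = u * w * (v * z) + cvw • (u * z) := by
          simp [mul_add, add_mul, mul_smul_comm, smul_mul_assoc, mul_assoc]
      _ = (w * u + cuw • (1 : A)) * (v * z) + cvw • (u * z) := by rw [huw]
      _ = w * u * (v * z) + cuw • (v * z) + cvw • (u * z) := by
          simp [add_mul, smul_mul_assoc, mul_assoc]
  have h2 : w * z * (u * v) = w * u * (v * z) - cvz • (w * u) - cuz • (w * v) := by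
    calc w * z * (u * v) = w * (z * u) * v := by simp [mul_assoc]
      _ = w * (u * z - cuz • (1 : A)) * v := by rw [huz']
      _ = w * u * (z * v) - cuz • (w * v) := by
          simp [mul_sub, sub_mul, mul_smul_comm, smul_mul_assoc, mul_assoc]
      _ = w * u * (v * z - cvz • (1 : A)) - cuz • (w * v) := by rw [hvz']
      _ = w * u * (v * z) - cvz • (w * u) - cuz • (w * v) := by
          simp [mul_sub, mul_smul_comm, mul_assoc]
  rw [h1, h2]; abel

private lemma sum_rot3 {β : Type*} [AddCommMonoid β] {ι : Type*} [Fintype ι]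
    (f : ι → ι → ι → β) :
    (∑ j, ∑ k, ∑ l, f j k l) = ∑ l, ∑ j, ∑ k, f j k l := by
  calc (∑ j, ∑ k, ∑ l, f j k l) = ∑ j, ∑ l, ∑ k, f j k l :=
        Finset.sum_congr rfl fun j _ => Finset.sum_comm
    _ = ∑ l, ∑ j, ∑ k, f j k l := Finset.sum_comm

private lemma sum4_swap {β : Type*} [AddCommMonoid β] {ι : Type*} [Fintype ι]
    (f : ι → ι → ι → ι → β) :
    (∑ a, ∑ b, ∑ c, ∑ d, f a b c d) = ∑ c, ∑ d, ∑ a, ∑ b, f a b c d := by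
  calc (∑ a, ∑ b, ∑ c, ∑ d, f a b c d) = ∑ a, ∑ c, ∑ b, ∑ d, f a b c d :=
        Finset.sum_congr rfl fun a _ => Finset.sum_comm
    _ = ∑ c, ∑ a, ∑ b, ∑ d, f a b c d := Finset.sum_comm
    _ = ∑ c, ∑ d, ∑ a, ∑ b, f a b c d :=
        Finset.sum_congr rfl fun c _ => sum_rot3 _

private lemma sum_swap_index {n : ℕ} {β : Type*} [AddCommMonoid β]
    (f : (Fin n ⊕ Fin n) → β) :
    (∑ p, f (Sum.swap p)) = ∑ p, f p :=
  Fintype.sum_equiv (Equiv.sumComm (Fin n) (Fin n)) _ _ fun _ => rfl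

/-- First identity of Lemma 4 of the paper: for annihilation operators `a`
satisfying the CCR, the doubled vector `x = (a, a#)`, and Hermitian matrices
`P`, `M` of doubled form, `[x†Px, (1/2)·x†Mx] = x†(PJM − MJP)x` where
`J = diag(I, −I)`. -/
theorem commutator_quadratic_hamiltonians {A : Type*} [Ring A] [StarRing A]
    [Algebra ℂ A] [StarModule ℂ A] {n : ℕ}
    (a : Fin n → A)
    (hcomm : ∀ i j, a i * a j = a j * a i)
    (hccr : ∀ i j, a i * star (a j) - star (a j) * a i
        = if i = j then (1 : A) else 0)
    (x : (Fin n ⊕ Fin n) → A)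
    (hxl : ∀ i, x (Sum.inl i) = a i)
    (hxr : ∀ i, x (Sum.inr i) = star (a i))
    (P₁ P₂ M₁ M₂ : Matrix (Fin n) (Fin n) ℂ)
    (hP₁ : P₁.IsHermitian) (hP₂ : P₂ = P₂ᵀ)
    (hM₁ : M₁.IsHermitian) (hM₂ : M₂ = M₂ᵀ)
    (P M J : Matrix (Fin n ⊕ Fin n) (Fin n ⊕ Fin n) ℂ)
    (hP : P = Matrix.fromBlocks P₁ P₂ (P₂.map (starRingEnd ℂ)) (P₁.map (starRingEnd ℂ)))
    (hM : M = Matrix.fromBlocks M₁ M₂ (M₂.map (starRingEnd ℂ)) (M₁.map (starRingEnd ℂ)))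
    (hJ : J = Matrix.fromBlocks 1 0 0 (-1))
    (Q : Matrix (Fin n ⊕ Fin n) (Fin n ⊕ Fin n) ℂ → A)
    (hQ : ∀ K, Q K = ∑ i, ∑ j, star (x i) * (K i j • x j)) :
    Q P * ((1 / 2 : ℂ) • Q M) - ((1 / 2 : ℂ) • Q M) * Q P
      = Q (P * J * M - M * J * P) := by
  classical
  -- basic facts
  have hstar : ∀ p : Fin n ⊕ Fin n, star (x p) = x (Sum.swap p) := by
    rintro (i | i) <;> simp [hxl, hxr]
  have hP₂' : ∀ i j, P₂ i j = P₂ j i := by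
    intro i j
    have h := congrFun (congrFun hP₂ i) j
    rwa [Matrix.transpose_apply] at h
  have hM₂' : ∀ i j, M₂ i j = M₂ j i := by
    intro i j
    have h := congrFun (congrFun hM₂ i) j
    rwa [Matrix.transpose_apply] at h
  have hP₁' : ∀ i j, P₁ i j = star (P₁ j i) := fun i j => (hP₁.apply i j).symm
  have hM₁' : ∀ i j, M₁ i j = star (M₁ j i) := fun i j => (hM₁.apply i j).symm
  -- the CCR in scalar-smul form
  have hccr' : ∀ i j, a i * star (a j)
      = star (a j) * a i + (if i = j then (1 : ℂ) else 0) • (1 : A) := by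
    intro i j
    have h : a i * star (a j) = star (a j) * a i + (if i = j then (1 : A) else 0) := by
      rw [← hccr i j]; abel
    rw [h]
    congr 1
    split_ifs <;> simp
  have hxx : ∀ p q, x p * x q = x q * x p + J p (Sum.swap q) • (1 : A) := by
    rintro (i | i) (j | j)
    · simp [hxl, hJ, hcomm i j]
    · simpa [hxl, hxr, hJ, Matrix.one_apply] using hccr' i j
    · have h := hccr' j i
      rw [hxl, hxr, hJ]
      simp only [Sum.swap_inl, Matrix.fromBlocks_apply₂₂, Matrix.neg_apply, Matrix.one_apply]
      rw [h]
      rcases eq_or_ne i j with hij | hij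
      · subst hij; simp
      · simp [hij, hij.symm]
    · have h := congrArg star (hcomm j i)
      simp only [StarMul.star_mul] at h
      simp [hxr, hJ, h]
  have hJsymm : ∀ p q, J p q = J q p := by
    rintro (i | i) (j | j) <;>
      simp [hJ, Matrix.one_apply, eq_comm]
  have hJswap : ∀ p q, J (Sum.swap p) (Sum.swap q) = - J p q := by
    rintro (i | i) (j | j) <;>
      simp only [hJ, Sum.swap_inl, Sum.swap_inr, Matrix.fromBlocks_apply₁₁,
        Matrix.fromBlocks_apply₁₂, Matrix.fromBlocks_apply₂₁, Matrix.fromBlocks_apply₂₂,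
        Matrix.neg_apply, Matrix.zero_apply, neg_zero, neg_neg]
  have hPsw : ∀ p q, P (Sum.swap p) q = P (Sum.swap q) p := by
    rintro (i | i) (j | j) <;>
      simp [hP, hP₂' i j, hP₁' i j]
  have hMsw : ∀ p q, M (Sum.swap p) q = M (Sum.swap q) p := by
    rintro (i | i) (j | j) <;>
      simp [hM, hM₂' i j, hM₁' i j]
  -- quadratic form in normalized shape
  have hQn : ∀ K : Matrix (Fin n ⊕ Fin n) (Fin n ⊕ Fin n) ℂ,
      Q K = ∑ m, ∑ l, K m l • (x (Sum.swap m) * x l) := by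
    intro K
    rw [hQ]
    refine Finset.sum_congr rfl fun m _ => Finset.sum_congr rfl fun l _ => ?_
    rw [mul_smul_comm, hstar]
  -- scalar coefficient identities
  have hPJM : ∀ m l, (∑ j, ∑ k, P m j * M k l * J j k) = (P * J * M) m l := by
    intro m l
    rw [Finset.sum_comm]
    simp only [Matrix.mul_apply, Finset.sum_mul]
    exact Finset.sum_congr rfl fun k _ => Finset.sum_congr rfl fun j _ => by ring
  have hMJP : ∀ k j, (M * J * P) k j = ∑ i, ∑ l, P i j * M k l * J i l := by
    intro k j
    simp only [Matrix.mul_apply, Finset.sum_mul]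
    refine Finset.sum_congr rfl fun i _ => Finset.sum_congr rfl fun l _ => ?_
    rw [hJsymm l i]; ring
  -- collapsing inner double sums of scalars acting on a fixed vector
  have collapse : ∀ (c : (Fin n ⊕ Fin n) → (Fin n ⊕ Fin n) → ℂ) (y : A),
      (∑ p, ∑ q, c p q • y) = (∑ p, ∑ q, c p q) • y := by
    intro c y
    simp only [Finset.sum_smul]
  -- the common core for T1 and T2
  have core2 : ∀ m : Fin n ⊕ Fin n,
      (∑ j, ∑ k, ∑ l, (P m j * M k l * J j k) • (x (Sum.swap m) * x l))
        = ∑ l, ((P * J * M) m l) • (x (Sum.swap m) * x l) := by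
    intro m
    calc (∑ j, ∑ k, ∑ l, (P m j * M k l * J j k) • (x (Sum.swap m) * x l))
        = ∑ l, ∑ j, ∑ k, (P m j * M k l * J j k) • (x (Sum.swap m) * x l) := sum_rot3 _
      _ = ∑ l, ((P * J * M) m l) • (x (Sum.swap m) * x l) := by
          refine Finset.sum_congr rfl fun l _ => ?_
          rw [collapse, hPJM]
  -- T2
  have hT2 : (∑ i, ∑ j, ∑ k, ∑ l,
        (P i j * M k l * J j k) • (x (Sum.swap i) * x l))
      = ∑ m, ∑ l, ((P * J * M) m l) • (x (Sum.swap m) * x l) :=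
    Finset.sum_congr rfl fun m _ => core2 m
  -- T1
  have hT1 : (∑ i, ∑ j, ∑ k, ∑ l,
        (P i j * M k l * J (Sum.swap i) k) • (x j * x l))
      = ∑ m, ∑ l, ((P * J * M) m l) • (x (Sum.swap m) * x l) := by
    calc (∑ i, ∑ j, ∑ k, ∑ l, (P i j * M k l * J (Sum.swap i) k) • (x j * x l))
        = ∑ i, ∑ j, ∑ k, ∑ l, (P (Sum.swap i) j * M k l * J i k) • (x j * x l) := by
          refine (sum_swap_index _).symm.trans ?_
          simp only [Sum.swap_swap]
      _ = ∑ i, ∑ j, ∑ k, ∑ l, (P (Sum.swap j) i * M k l * J i k) • (x j * x l) := by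
          refine Finset.sum_congr rfl fun i _ => Finset.sum_congr rfl fun j _ => ?_
          rw [hPsw]
      _ = ∑ j, ∑ i, ∑ k, ∑ l, (P (Sum.swap j) i * M k l * J i k) • (x j * x l) :=
          Finset.sum_comm
      _ = ∑ j, ∑ i, ∑ k, ∑ l, (P j i * M k l * J i k) • (x (Sum.swap j) * x l) := by
          refine (sum_swap_index _).symm.trans ?_
          simp only [Sum.swap_swap]
      _ = ∑ m, ∑ l, ((P * J * M) m l) • (x (Sum.swap m) * x l) :=
          Finset.sum_congr rfl fun m _ => core2 m
  -- T4
  have hT4 : (∑ i, ∑ j, ∑ k, ∑ l,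
        (P i j * M k l * J (Sum.swap i) (Sum.swap l)) • (x (Sum.swap k) * x j))
      = ∑ m, ∑ l, (-((M * J * P) m l)) • (x (Sum.swap m) * x l) := by
    calc (∑ i, ∑ j, ∑ k, ∑ l,
          (P i j * M k l * J (Sum.swap i) (Sum.swap l)) • (x (Sum.swap k) * x j))
        = ∑ i, ∑ j, ∑ k, ∑ l,
            (-(P i j * M k l * J i l)) • (x (Sum.swap k) * x j) := by
          refine Finset.sum_congr rfl fun i _ => Finset.sum_congr rfl fun j _ =>
            Finset.sum_congr rfl fun k _ => Finset.sum_congr rfl fun l _ => ?_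
          rw [hJswap]; congr 1; ring
      _ = ∑ i, ∑ k, ∑ j, ∑ l,
            (-(P i j * M k l * J i l)) • (x (Sum.swap k) * x j) :=
          Finset.sum_congr rfl fun i _ => Finset.sum_comm
      _ = ∑ k, ∑ i, ∑ j, ∑ l,
            (-(P i j * M k l * J i l)) • (x (Sum.swap k) * x j) := Finset.sum_comm
      _ = ∑ k, ∑ j, ∑ i, ∑ l,
            (-(P i j * M k l * J i l)) • (x (Sum.swap k) * x j) :=
          Finset.sum_congr rfl fun k _ => Finset.sum_comm
      _ = ∑ m, ∑ l, (-((M * J * P) m l)) • (x (Sum.swap m) * x l) := by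
          refine Finset.sum_congr rfl fun k _ => Finset.sum_congr rfl fun j _ => ?_
          rw [collapse]
          congr 1
          rw [hMJP]
          simp only [Finset.sum_neg_distrib]
  -- T3
  have hT3 : (∑ i, ∑ j, ∑ k, ∑ l,
        (P i j * M k l * J j (Sum.swap l)) • (x (Sum.swap k) * x (Sum.swap i)))
      = ∑ m, ∑ l, (-((M * J * P) m l)) • (x (Sum.swap m) * x l) := by
    have coef3 : ∀ k i, (∑ j, ∑ l, P (Sum.swap i) j * M k l * J j (Sum.swap l))
        = -((M * J * P) k i) := by
      intro k i
      calc (∑ j, ∑ l, P (Sum.swap i) j * M k l * J j (Sum.swap l))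
          = ∑ j, ∑ l, P (Sum.swap j) i * M k l * J j (Sum.swap l) := by
            refine Finset.sum_congr rfl fun j _ => Finset.sum_congr rfl fun l _ => ?_
            rw [hPsw]
        _ = ∑ j, ∑ l, P j i * M k l * J (Sum.swap j) (Sum.swap l) := by
            refine (sum_swap_index _).symm.trans ?_
            simp only [Sum.swap_swap]
        _ = ∑ j, ∑ l, -(P j i * M k l * J j l) := by
            refine Finset.sum_congr rfl fun j _ => Finset.sum_congr rfl fun l _ => ?_
            rw [hJswap]; ring
        _ = -((M * J * P) k i) := by
            rw [hMJP]
            simp only [Finset.sum_neg_distrib]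
    calc (∑ i, ∑ j, ∑ k, ∑ l,
          (P i j * M k l * J j (Sum.swap l)) • (x (Sum.swap k) * x (Sum.swap i)))
        = ∑ i, ∑ j, ∑ k, ∑ l,
            (P (Sum.swap i) j * M k l * J j (Sum.swap l)) • (x (Sum.swap k) * x i) := by
          refine (sum_swap_index _).symm.trans ?_
          simp only [Sum.swap_swap]
      _ = ∑ i, ∑ k, ∑ j, ∑ l,
            (P (Sum.swap i) j * M k l * J j (Sum.swap l)) • (x (Sum.swap k) * x i) :=
          Finset.sum_congr rfl fun i _ => Finset.sum_comm
      _ = ∑ k, ∑ i, ∑ j, ∑ l,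
            (P (Sum.swap i) j * M k l * J j (Sum.swap l)) • (x (Sum.swap k) * x i) :=
          Finset.sum_comm
      _ = ∑ m, ∑ l, (-((M * J * P) m l)) • (x (Sum.swap m) * x l) := by
          refine Finset.sum_congr rfl fun k _ => Finset.sum_congr rfl fun i _ => ?_
          rw [collapse, coef3]
  -- the monomial commutator
  have hmono : ∀ i j k l : Fin n ⊕ Fin n,
      x (Sum.swap i) * x j * (x (Sum.swap k) * x l)
          - x (Sum.swap k) * x l * (x (Sum.swap i) * x j)
        = J (Sum.swap i) k • (x j * x l) + J j k • (x (Sum.swap i) * x l)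
            + J j (Sum.swap l) • (x (Sum.swap k) * x (Sum.swap i))
            + J (Sum.swap i) (Sum.swap l) • (x (Sum.swap k) * x j) := by
    intro i j k l
    refine comm4 _ _ _ _ _ _ _ _ ?_ ?_ (hxx _ _) (hxx _ _)
    · simpa using hxx (Sum.swap i) (Sum.swap k)
    · simpa using hxx j (Sum.swap k)
  -- the key commutator identity
  have key : Q P * Q M - Q M * Q P = (2 : ℂ) • Q (P * J * M - M * J * P) := by
    rw [hQn, hQn, hQn]
    have hPM : (∑ m, ∑ l, P m l • (x (Sum.swap m) * x l))
          * (∑ m, ∑ l, M m l • (x (Sum.swap m) * x l))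
        = ∑ i, ∑ j, ∑ k, ∑ l,
            (P i j * M k l) • (x (Sum.swap i) * x j * (x (Sum.swap k) * x l)) := by
      calc (∑ m, ∑ l, P m l • (x (Sum.swap m) * x l))
            * (∑ m, ∑ l, M m l • (x (Sum.swap m) * x l))
          = ∑ k, ∑ l, ∑ i, ∑ j,
              (M k l * P i j) • (x (Sum.swap i) * x j * (x (Sum.swap k) * x l)) := by
            simp only [Finset.sum_mul, Finset.mul_sum, Finset.smul_sum, smul_mul_assoc,
              mul_smul_comm, smul_smul]
        _ = ∑ i, ∑ j, ∑ k, ∑ l,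
              (M k l * P i j) • (x (Sum.swap i) * x j * (x (Sum.swap k) * x l)) :=
            sum4_swap _
        _ = ∑ i, ∑ j, ∑ k, ∑ l,
              (P i j * M k l) • (x (Sum.swap i) * x j * (x (Sum.swap k) * x l)) := by
            refine Finset.sum_congr rfl fun i _ => Finset.sum_congr rfl fun j _ =>
              Finset.sum_congr rfl fun k _ => Finset.sum_congr rfl fun l _ => ?_
            rw [mul_comm (M k l) (P i j)]
    have hMP : (∑ m, ∑ l, M m l • (x (Sum.swap m) * x l))
          * (∑ m, ∑ l, P m l • (x (Sum.swap m) * x l))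
        = ∑ i, ∑ j, ∑ k, ∑ l,
            (P i j * M k l) • (x (Sum.swap k) * x l * (x (Sum.swap i) * x j)) := by
      simp only [Finset.sum_mul, Finset.mul_sum, Finset.smul_sum, smul_mul_assoc,
        mul_smul_comm, smul_smul]
    rw [hPM, hMP]
    simp only [← Finset.sum_sub_distrib, ← smul_sub]
    calc (∑ i, ∑ j, ∑ k, ∑ l, (P i j * M k l) •
            (x (Sum.swap i) * x j * (x (Sum.swap k) * x l)
              - x (Sum.swap k) * x l * (x (Sum.swap i) * x j)))
        = ∑ i, ∑ j, ∑ k, ∑ l,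
            ((P i j * M k l * J (Sum.swap i) k) • (x j * x l)
              + (P i j * M k l * J j k) • (x (Sum.swap i) * x l)
              + (P i j * M k l * J j (Sum.swap l)) • (x (Sum.swap k) * x (Sum.swap i))
              + (P i j * M k l * J (Sum.swap i) (Sum.swap l)) • (x (Sum.swap k) * x j)) := by
          refine Finset.sum_congr rfl fun i _ => Finset.sum_congr rfl fun j _ =>
            Finset.sum_congr rfl fun k _ => Finset.sum_congr rfl fun l _ => ?_
          rw [hmono i j k l]
          simp only [smul_add, smul_smul]
      _ = (∑ i, ∑ j, ∑ k, ∑ l, (P i j * M k l * J (Sum.swap i) k) • (x j * x l))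
            + (∑ i, ∑ j, ∑ k, ∑ l, (P i j * M k l * J j k) • (x (Sum.swap i) * x l))
            + (∑ i, ∑ j, ∑ k, ∑ l,
                (P i j * M k l * J j (Sum.swap l)) • (x (Sum.swap k) * x (Sum.swap i)))
            + (∑ i, ∑ j, ∑ k, ∑ l,
                (P i j * M k l * J (Sum.swap i) (Sum.swap l)) • (x (Sum.swap k) * x j)) := by
          simp only [Finset.sum_add_distrib]
      _ = (2 : ℂ) • ∑ m, ∑ l, (P * J * M - M * J * P) m l • (x (Sum.swap m) * x l) := by
          rw [hT1, hT2, hT3, hT4]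
          simp only [Finset.smul_sum, smul_smul, ← Finset.sum_add_distrib]
          refine Finset.sum_congr rfl fun m _ => Finset.sum_congr rfl fun l _ => ?_
          rw [← add_smul, ← add_smul, ← add_smul]
          congr 1
          simp only [Matrix.sub_apply]
          ring
  calc Q P * ((1 / 2 : ℂ) • Q M) - ((1 / 2 : ℂ) • Q M) * Q P
      = (1 / 2 : ℂ) • (Q P * Q M - Q M * Q P) := by
        rw [mul_smul_comm, smul_mul_assoc, smul_sub]
    _ = (1 / 2 : ℂ) • ((2 : ℂ) • Q (P * J * M - M * J * P)) := by rw [key]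
    _ = Q (P * J * M - M * J * P) := by
        rw [smul_smul]; norm_num
end

section
/- Let A be a unital star algebra over ℂ and a : Fin n → A satisfy the canonical commutation relations aᵢ·aⱼ = aⱼ·aᵢ and aᵢ·(aⱼ)* − (aⱼ)*·aᵢ = δᵢⱼ·1. Let x = (a, a#) be the doubled vector, let P be a 2n×2n complex Hermitian matrix of doubled form, let N₁, N₂ ∈ ℂ^{1×n}, set L = N₁·a + N₂·a# ∈ A (i.e. L = Ñx with Ñ = [N₁ N₂]), and let N be the 2×2n matrix [[N₁,N₂],[N₂#,N₁#]]. With J = diag(I,−I) (2n×2n) and j = diag(1,−1) (2×2), and ℒ(X) = (1/2)·L*·(X·L − L·X) + (1/2)·(L*·X − X·L*)·L, one has ℒ(x†Px) = tr(P·J·N†·diag(1,0)·N·J)·1 − (1/2)·x†(N†·j·N·J·P + P·J·N†·j·N)x. -/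
open Matrix Finset
namespace LindbladAux
variable {n : ℕ}

noncomputable def eps : Fin n ⊕ Fin n → ℂ := Sum.elim (fun _ => 1) (fun _ => -1)

noncomputable def Th : (Fin n ⊕ Fin n) → (Fin n ⊕ Fin n) → ℂ
  | .inl i, .inr j => if i = j then 1 else 0
  | .inr i, .inl j => if i = j then -1 else 0
  | _, _ => 0

lemma sum_mul_Th (c : Fin n ⊕ Fin n → ℂ) (p : Fin n ⊕ Fin n) :
    ∑ q, c q * Th p q = eps p * c (Sum.swap p) := by
  cases p with
  | inl i => rw [Fintype.sum_sum_type]; simp [Th, eps, mul_ite]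
  | inr i => rw [Fintype.sum_sum_type]; simp [Th, eps, mul_ite]


@[simp] lemma eps_swap (p : Fin n ⊕ Fin n) : eps (Sum.swap p) = - eps p := by
  cases p <;> simp [eps]

@[simp] lemma eps_conj (p : Fin n ⊕ Fin n) : (starRingEnd ℂ) (eps p) = eps p := by
  cases p <;> simp [eps]

lemma sum_swap_reindexA {A : Type*} [AddCommMonoid A] (f : Fin n ⊕ Fin n → A) :
    ∑ p, f (Sum.swap p) = ∑ p, f p :=
  Fintype.sum_equiv (Equiv.sumComm (Fin n) (Fin n)) _ _ (fun p => by cases p <;> rfl)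

lemma F_antisym {A : Type*} [Ring A] [Algebra ℂ A] (x : Fin n ⊕ Fin n → A)
    (comm : ∀ p q, x p * x q = x q * x p + Th p q • (1 : A))
    (D : (Fin n ⊕ Fin n) → (Fin n ⊕ Fin n) → ℂ) (hD : ∀ p q, D q p = - D p q) :
    ∑ p, ∑ q, D p q • (x p * x q)
      = ((1/2 : ℂ) * ∑ p, ∑ q, D p q * Th p q) • (1 : A) := by
  have key : (∑ p, ∑ q, D p q • (x p * x q)) + (∑ p, ∑ q, D p q • (x p * x q))
      = (∑ p, ∑ q, D p q * Th p q) • (1 : A) := by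
    have hswap : (∑ p, ∑ q, D p q • (x p * x q)) = ∑ p, ∑ q, D q p • (x q * x p) :=
      Finset.sum_comm
    nth_rewrite 1 [hswap]
    rw [← Finset.sum_add_distrib]
    have : ∀ p, (∑ q, D q p • (x q * x p)) + (∑ q, D p q • (x p * x q))
        = ∑ q, (D p q * Th p q) • (1 : A) := by
      intro p
      rw [← Finset.sum_add_distrib]
      refine Finset.sum_congr rfl fun q _ => ?_
      rw [hD, comm p q, smul_add, neg_smul, smul_smul]
      abel
    rw [Finset.sum_congr rfl fun p _ => this p]
    rw [Finset.sum_smul]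
    exact Finset.sum_congr rfl fun p _ => Finset.sum_smul.symm
  have h2 : (2 : ℂ) • (∑ p, ∑ q, D p q • (x p * x q))
      = (∑ p, ∑ q, D p q * Th p q) • (1 : A) := by
    rw [two_smul]; exact key
  calc ∑ p, ∑ q, D p q • (x p * x q)
      = (1/2 : ℂ) • ((2 : ℂ) • (∑ p, ∑ q, D p q • (x p * x q))) := by
        rw [smul_smul]; norm_num
    _ = _ := by rw [h2, smul_smul]

section Ops
variable {A : Type*} [Ring A] [Algebra ℂ A] (x : Fin n ⊕ Fin n → A)
  (comm : ∀ p q, x p * x q = x q * x p + Th p q • (1 : A))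
  (M : Fin n ⊕ Fin n → ℂ) (L : A)
  (hL : L = ∑ p, M p • x p)

include comm hL in
lemma commL (r : Fin n ⊕ Fin n) :
    x r * L = L * x r + (eps r * M (Sum.swap r)) • (1 : A) := by
  subst hL
  calc x r * (∑ k, M k • x k) = ∑ k, M k • (x r * x k) := by
        rw [Finset.mul_sum]; exact Finset.sum_congr rfl fun k _ => (mul_smul_comm _ _ _)
    _ = ∑ k, (M k • (x k * x r) + (M k * Th r k) • (1 : A)) := by
        refine Finset.sum_congr rfl fun k _ => ?_
        rw [comm r k, smul_add, smul_smul]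
    _ = (∑ k, M k • x k) * x r + (∑ k, M k * Th r k) • (1 : A) := by
        rw [Finset.sum_add_distrib, Finset.sum_mul, Finset.sum_smul]
        congr 1
        exact Finset.sum_congr rfl fun k _ => (smul_mul_assoc _ _ _).symm
    _ = _ := by rw [sum_mul_Th]

include comm hL in
lemma comm_mono (r s : Fin n ⊕ Fin n) :
    (x r * x s) * L - L * (x r * x s)
      = (eps s * M (Sum.swap s)) • x r + (eps r * M (Sum.swap r)) • x s := by
  have e1 := commL x comm M L hL s
  have e2 := commL x comm M L hL r
  calc (x r * x s) * L - L * (x r * x s)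
      = x r * (x s * L) - L * (x r * x s) := by rw [mul_assoc]
    _ = x r * (L * x s + (eps s * M (Sum.swap s)) • (1:A)) - L * (x r * x s) := by rw [e1]
    _ = (L * x r + (eps r * M (Sum.swap r)) • (1:A)) * x s + (eps s * M (Sum.swap s)) • x r
          - L * (x r * x s) := by
        rw [mul_add, ← mul_assoc, e2, mul_smul_comm, mul_one]
    _ = _ := by rw [add_mul, smul_mul_assoc, one_mul, mul_assoc]; abel

include comm hL in
lemma lind_mono (Ls : A) (hLs : Ls = ∑ p, (starRingEnd ℂ) (M (Sum.swap p)) • x p)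
    (r s : Fin n ⊕ Fin n) :
    (1/2:ℂ) • (Ls * ((x r * x s) * L - L * (x r * x s)))
      + (1/2:ℂ) • ((Ls * (x r * x s) - (x r * x s) * Ls) * L)
    = (1/2:ℂ) • ((eps s * M (Sum.swap s)) • (Ls * x r)
        + (eps r * M (Sum.swap r)) • (Ls * x s)
        - ((eps s * (starRingEnd ℂ) (M s)) • (x r * L)
            + (eps r * (starRingEnd ℂ) (M r)) • (x s * L))) := by
  have h1 := comm_mono x comm M L hL r s
  have h2 := comm_mono x comm (fun p => (starRingEnd ℂ) (M (Sum.swap p))) (Ls) hLs r s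
  simp only [Sum.swap_swap] at h2
  rw [h1, show Ls * (x r * x s) - (x r * x s) * Ls
      = -((x r * x s) * Ls - Ls * (x r * x s)) from by abel, h2]
  simp only [mul_add, add_mul, mul_smul_comm, smul_mul_assoc, neg_mul, smul_add, smul_sub,
    smul_neg]
  abel
section Assemble
variable {A : Type*} [Ring A] [Algebra ℂ A]

lemma collapse_left (c : Fin n ⊕ Fin n → Fin n ⊕ Fin n → ℂ) (z : Fin n ⊕ Fin n → A) :
    ∑ i, ∑ j, c i j • z (Sum.swap i) = ∑ p, (∑ j, c (Sum.swap p) j) • z p := by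
  have h1 : ∀ i, ∑ j, c i j • z (Sum.swap i) = (∑ j, c i j) • z (Sum.swap i) := fun i =>
    (Finset.sum_smul).symm
  rw [Finset.sum_congr rfl fun i _ => h1 i]
  exact (Fintype.sum_equiv (Equiv.sumComm (Fin n) (Fin n))
    (fun i => (∑ j, c i j) • z (Sum.swap i)) (fun p => (∑ j, c (Sum.swap p) j) • z p)
    (fun i => by cases i <;> rfl)).symm ▸ rfl

lemma collapse_right (c : Fin n ⊕ Fin n → Fin n ⊕ Fin n → ℂ) (z : Fin n ⊕ Fin n → A) :
    ∑ i, ∑ j, c i j • z j = ∑ p, (∑ i, c i p) • z p := by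
  rw [Finset.sum_comm]
  exact Finset.sum_congr rfl fun p _ => (Finset.sum_smul).symm

lemma bilin (x : Fin n ⊕ Fin n → A) (c d : Fin n ⊕ Fin n → ℂ) :
    (∑ p, c p • x p) * (∑ q, d q • x q) = ∑ p, ∑ q, (c p * d q) • (x p * x q) := by
  rw [Finset.sum_mul]
  refine Finset.sum_congr rfl fun p _ => ?_
  rw [Finset.mul_sum]
  refine Finset.sum_congr rfl fun q _ => ?_
  rw [smul_mul_assoc, mul_smul_comm, smul_smul]

lemma assemble (x : Fin n ⊕ Fin n → A) (M : Fin n ⊕ Fin n → ℂ) (L Ls : A)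
    (P : Matrix (Fin n ⊕ Fin n) (Fin n ⊕ Fin n) ℂ) :
    ∑ i, ∑ j, P i j • ((1/2:ℂ) • ((eps j * M (Sum.swap j)) • (Ls * x (Sum.swap i))
        + (eps (Sum.swap i) * M i) • (Ls * x j)
        - ((eps j * (starRingEnd ℂ) (M j)) • (x (Sum.swap i) * L)
            + (eps (Sum.swap i) * (starRingEnd ℂ) (M (Sum.swap i))) • (x j * L))))
    = (∑ p, ((∑ j, P (Sum.swap p) j * ((1/2:ℂ) * (eps j * M (Sum.swap j))))
          + ∑ i, P i p * ((1/2:ℂ) * (eps (Sum.swap i) * M i))) • (Ls * x p))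
      - ∑ p, ((∑ j, P (Sum.swap p) j * ((1/2:ℂ) * (eps j * (starRingEnd ℂ) (M j))))
          + ∑ i, P i p * ((1/2:ℂ) * (eps (Sum.swap i) * (starRingEnd ℂ) (M (Sum.swap i))))) •
            (x p * L) := by
  have step1 : ∀ i j : Fin n ⊕ Fin n,
      P i j • ((1/2:ℂ) • ((eps j * M (Sum.swap j)) • (Ls * x (Sum.swap i))
        + (eps (Sum.swap i) * M i) • (Ls * x j)
        - ((eps j * (starRingEnd ℂ) (M j)) • (x (Sum.swap i) * L)
            + (eps (Sum.swap i) * (starRingEnd ℂ) (M (Sum.swap i))) • (x j * L))))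
      = (P i j * ((1/2:ℂ) * (eps j * M (Sum.swap j)))) • (Ls * x (Sum.swap i))
        + (P i j * ((1/2:ℂ) * (eps (Sum.swap i) * M i))) • (Ls * x j)
        - ((P i j * ((1/2:ℂ) * (eps j * (starRingEnd ℂ) (M j)))) • (x (Sum.swap i) * L)
          + (P i j * ((1/2:ℂ) * (eps (Sum.swap i) * (starRingEnd ℂ) (M (Sum.swap i))))) •
              (x j * L)) := by
    intro i j
    simp only [smul_add, smul_sub, smul_smul]
  rw [Finset.sum_congr rfl fun i _ => Finset.sum_congr rfl fun j _ => step1 i j]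
  simp only [Finset.sum_sub_distrib, Finset.sum_add_distrib]
  rw [collapse_left (fun i j => P i j * ((1/2:ℂ) * (eps j * M (Sum.swap j))))
        (fun p => Ls * x p),
      collapse_right (fun i j => P i j * ((1/2:ℂ) * (eps (Sum.swap i) * M i)))
        (fun p => Ls * x p),
      collapse_left (fun i j => P i j * ((1/2:ℂ) * (eps j * (starRingEnd ℂ) (M j))))
        (fun p => x p * L),
      collapse_right
        (fun i j => P i j * ((1/2:ℂ) * (eps (Sum.swap i) * (starRingEnd ℂ) (M (Sum.swap i)))))
        (fun p => x p * L),
      ← Finset.sum_add_distrib, ← Finset.sum_add_distrib]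
  congr 1 <;> exact Finset.sum_congr rfl fun p _ => (add_smul _ _ _).symm

lemma to_bilin_left (x : Fin n ⊕ Fin n → A) (c d : Fin n ⊕ Fin n → ℂ) (Ls : A)
    (hLs : Ls = ∑ p, d p • x p) :
    ∑ p, c p • (Ls * x p) = ∑ p, ∑ q, (d p * c q) • (x p * x q) := by
  have : ∑ p, c p • (Ls * x p) = Ls * ∑ p, c p • x p := by
    rw [Finset.mul_sum]
    exact Finset.sum_congr rfl fun p _ => (mul_smul_comm _ _ _).symm
  rw [this, hLs, bilin]

lemma to_bilin_right (x : Fin n ⊕ Fin n → A) (c d : Fin n ⊕ Fin n → ℂ) (L : A)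
    (hL : L = ∑ q, d q • x q) :
    ∑ p, c p • (x p * L) = ∑ p, ∑ q, (c p * d q) • (x p * x q) := by
  have : ∑ p, c p • (x p * L) = (∑ p, c p • x p) * L := by
    rw [Finset.sum_mul]
    exact Finset.sum_congr rfl fun p _ => (smul_mul_assoc _ _ _).symm
  rw [this, hL, bilin]

lemma merge3 (y : Fin n ⊕ Fin n → Fin n ⊕ Fin n → A) (f g h : Fin n ⊕ Fin n → Fin n ⊕ Fin n → ℂ) :
    (∑ p, ∑ q, f p q • y p q) - (∑ p, ∑ q, g p q • y p q) + (∑ p, ∑ q, h p q • y p q)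
      = ∑ p, ∑ q, (f p q - g p q + h p q) • y p q := by
  rw [← Finset.sum_sub_distrib, ← Finset.sum_add_distrib]
  refine Finset.sum_congr rfl fun p _ => ?_
  rw [← Finset.sum_sub_distrib, ← Finset.sum_add_distrib]
  refine Finset.sum_congr rfl fun q _ => ?_
  rw [add_smul, sub_smul]

end Assemble

end Ops
end LindbladAux

open LindbladAux Finset

/-- Second identity of Lemma 4 of the paper: for annihilation operators `a`
satisfying the CCR, the doubled vector `x = (a, a#)`, a Hermitian matrix `P`
of doubled form, and the linear coupling operator `L = N₁·a + N₂·a#`, the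
Lindblad map satisfies
`ℒ(x†Px) = tr(P·J·N†·diag(1,0)·N·J)·1 − (1/2)·x†(N†·j·N·J·P + P·J·N†·j·N)x`. -/
theorem lindblad_of_quadratic_lyapunov {A : Type*} [Ring A] [StarRing A]
    [Algebra ℂ A] [StarModule ℂ A] {n : ℕ}
    (a : Fin n → A)
    (hcomm : ∀ i j, a i * a j = a j * a i)
    (hccr : ∀ i j, a i * star (a j) - star (a j) * a i
        = if i = j then (1 : A) else 0)
    (x : (Fin n ⊕ Fin n) → A)
    (hxl : ∀ i, x (Sum.inl i) = a i)
    (hxr : ∀ i, x (Sum.inr i) = star (a i))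
    (P₁ P₂ : Matrix (Fin n) (Fin n) ℂ)
    (hP₁ : P₁.IsHermitian) (hP₂ : P₂ = P₂ᵀ)
    (P J : Matrix (Fin n ⊕ Fin n) (Fin n ⊕ Fin n) ℂ)
    (hP : P = Matrix.fromBlocks P₁ P₂ (P₂.map (starRingEnd ℂ)) (P₁.map (starRingEnd ℂ)))
    (hJ : J = Matrix.fromBlocks 1 0 0 (-1))
    (N₁ N₂ : Matrix (Fin 1) (Fin n) ℂ)
    (L : A)
    (hL : L = (∑ k, N₁ 0 k • a k) + ∑ k, N₂ 0 k • star (a k))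
    (N : Matrix (Fin 1 ⊕ Fin 1) (Fin n ⊕ Fin n) ℂ)
    (hN : N = Matrix.fromBlocks N₁ N₂ (N₂.map (starRingEnd ℂ)) (N₁.map (starRingEnd ℂ)))
    (jm d : Matrix (Fin 1 ⊕ Fin 1) (Fin 1 ⊕ Fin 1) ℂ)
    (hjm : jm = Matrix.fromBlocks 1 0 0 (-1))
    (hd : d = Matrix.fromBlocks 1 0 0 0)
    (ℒ : A → A)
    (hℒ : ∀ X : A, ℒ X = (1 / 2 : ℂ) • (star L * (X * L - L * X)) +
        (1 / 2 : ℂ) • ((star L * X - X * star L) * L))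
    (Q : Matrix (Fin n ⊕ Fin n) (Fin n ⊕ Fin n) ℂ → A)
    (hQ : ∀ K, Q K = ∑ i, ∑ j, star (x i) * (K i j • x j)) :
    ℒ (Q P) = (P * J * Nᴴ * d * N * J).trace • (1 : A)
      - (1 / 2 : ℂ) • Q (Nᴴ * jm * N * J * P + P * J * Nᴴ * jm * N) := by
  classical
  have hxs : ∀ p, star (x p) = x (Sum.swap p) := by
    intro p
    cases p with
    | inl i => rw [Sum.swap_inl, hxl, hxr]
    | inr i => rw [Sum.swap_inr, hxr, hxl, star_star]
  have comm : ∀ p q, x p * x q = x q * x p + Th p q • (1 : A) := by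
    intro p q
    rcases p with i | i <;> rcases q with j | j
    · simp [hxl, Th, hcomm i j]
    · rw [hxl, hxr]
      have h := hccr i j
      rw [sub_eq_iff_eq_add] at h
      rw [h]
      show _ = _ + (if i = j then (1:ℂ) else 0) • (1:A)
      split_ifs <;> simp [add_comm]
    · rw [hxr, hxl]
      have h := hccr j i
      rw [sub_eq_iff_eq_add] at h
      rw [h]
      show _ = _ + (if i = j then (-1:ℂ) else 0) • (1:A)
      rcases eq_or_ne i j with rfl | hne
      · simp
      · simp [hne, Ne.symm hne]
    · have h := congrArg star (hcomm j i)
      rw [StarMul.star_mul, StarMul.star_mul] at h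
      rw [hxr, hxr]
      show _ = _ + (0:ℂ) • (1:A)
      simp [h]
  set M : Fin n ⊕ Fin n → ℂ := Sum.elim (N₁ 0) (N₂ 0) with hM
  set uu : (Fin n ⊕ Fin n) → ℂ := fun q => ∑ r, P r q * (eps r * M r) with huu
  have hLx : L = ∑ p, M p • x p := by
    rw [hL, Fintype.sum_sum_type]
    simp [hM, hxl, hxr]
  have hLsx : star L = ∑ p, (starRingEnd ℂ) (M (Sum.swap p)) • x p := by
    calc star L = ∑ p, (starRingEnd ℂ) (M (Sum.swap (Sum.swap p))) • x (Sum.swap p) := by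
          rw [hLx, star_sum]
          exact Finset.sum_congr rfl fun p _ => by
            rw [star_smul, hxs, Sum.swap_swap, starRingEnd_apply]
      _ = _ := sum_swap_reindexA (fun p => (starRingEnd ℂ) (M (Sum.swap p)) • x p)
  have hQP : Q P = ∑ i, ∑ j, P i j • (x (Sum.swap i) * x j) := by
    rw [hQ]
    exact Finset.sum_congr rfl fun i _ => Finset.sum_congr rfl fun j _ => by
      rw [mul_smul_comm, hxs]
  -- the Lindblad generator as a linear map
  let T : A →ₗ[ℂ] A :=
    { toFun := fun X => (1 / 2 : ℂ) • (star L * (X * L - L * X)) +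
        (1 / 2 : ℂ) • ((star L * X - X * star L) * L)
      map_add' := fun X Y => by
        simp only [add_mul, mul_add, mul_sub, sub_mul, smul_sub, smul_add]
        abel
      map_smul' := fun c X => by
        simp only [smul_mul_assoc, mul_smul_comm, ← smul_sub, ← smul_add, smul_smul,
          RingHom.id_apply]
        ring_nf }
  have hℒT : ℒ (Q P) = T (Q P) := hℒ _
  have expand : ℒ (Q P) = ∑ i, ∑ j, P i j •
      ((1/2:ℂ) • ((eps j * M (Sum.swap j)) • (star L * x (Sum.swap i))
        + (eps (Sum.swap i) * M i) • (star L * x j)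
        - ((eps j * (starRingEnd ℂ) (M j)) • (x (Sum.swap i) * L)
            + (eps (Sum.swap i) * (starRingEnd ℂ) (M (Sum.swap i))) • (x j * L)))) := by
    rw [hℒT, hQP, map_sum]
    refine Finset.sum_congr rfl fun i _ => ?_
    rw [map_sum]
    refine Finset.sum_congr rfl fun j _ => ?_
    rw [LinearMap.map_smul]
    congr 1
    have h := lind_mono x comm M L hLx (star L) hLsx (Sum.swap i) j
    simp only [Sum.swap_swap] at h
    exact h
  have hQS : Q (Nᴴ * jm * N * J * P + P * J * Nᴴ * jm * N)
      = ∑ p, ∑ q, (Nᴴ * jm * N * J * P + P * J * Nᴴ * jm * N) (Sum.swap p) q • (x p * x q) := by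
    rw [hQ]
    calc ∑ i, ∑ j, star (x i) * ((Nᴴ * jm * N * J * P + P * J * Nᴴ * jm * N) i j • x j)
        = ∑ i, ∑ j, (Nᴴ * jm * N * J * P + P * J * Nᴴ * jm * N) i j • (x (Sum.swap i) * x j) :=
          Finset.sum_congr rfl fun i _ => Finset.sum_congr rfl fun j _ => by
            rw [mul_smul_comm, hxs]
      _ = _ := by
          rw [← sum_swap_reindexA (fun p => ∑ q,
            (Nᴴ * jm * N * J * P + P * J * Nᴴ * jm * N) (Sum.swap p) q • (x p * x q))]
          simp only [Sum.swap_swap]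
  -- scalar facts
  have hP2sym : ∀ i j, P₂ i j = P₂ j i := fun i j =>
    congrFun (congrFun hP₂ i) j
  have hPd : ∀ p q, P (Sum.swap p) (Sum.swap q) = (starRingEnd ℂ) (P p q) := by
    intro p q
    rcases p with i | i <;> rcases q with j | j <;>
      simp [hP, Matrix.fromBlocks]
  have hPh : ∀ p q, (starRingEnd ℂ) (P p q) = P q p := by
    intro p q
    rcases p with i | i <;> rcases q with j | j
    · simp only [hP, Matrix.fromBlocks_apply₁₁, starRingEnd_apply]
      exact hP₁.apply j i
    · simp only [hP, Matrix.fromBlocks_apply₁₂, Matrix.fromBlocks_apply₂₁, Matrix.map_apply]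
      rw [hP2sym i j]
    · simp only [hP, Matrix.fromBlocks_apply₂₁, Matrix.fromBlocks_apply₁₂, Matrix.map_apply]
      rw [RingHom.congr_arg (starRingEnd ℂ) (hP2sym i j)]
      exact Complex.conj_conj _
    · simp only [hP, Matrix.fromBlocks_apply₂₂, Matrix.map_apply, Complex.conj_conj]
      exact (hP₁.apply i j).symm
  have hN0 : ∀ c, N (Sum.inl (0 : Fin 1)) c = M c := by
    intro c
    rcases c with k | k <;>
      simp only [hN, Matrix.fromBlocks_apply₁₁, Matrix.fromBlocks_apply₁₂] <;> rfl
  have hN1 : ∀ c, N (Sum.inr (0 : Fin 1)) c = (starRingEnd ℂ) (M (Sum.swap c)) := by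
    intro c
    rcases c with k | k <;>
      simp only [hN, Matrix.fromBlocks_apply₂₁, Matrix.fromBlocks_apply₂₂,
        Matrix.map_apply, Sum.swap_inl, Sum.swap_inr] <;> rfl
  have hJent : ∀ p q, J p q = if p = q then eps p else 0 := by
    intro p q
    rcases p with i | i <;> rcases q with j | j <;>
      simp [hJ, Matrix.fromBlocks, Matrix.one_apply, eps, eq_comm] <;>
      split_ifs <;> norm_num
  have mulJ : ∀ (X : Matrix (Fin n ⊕ Fin n) (Fin n ⊕ Fin n) ℂ) p q,
      (X * J) p q = X p q * eps q := by
    intro X p q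
    rw [Matrix.mul_apply]
    rw [Finset.sum_congr rfl fun r (_ : r ∈ Finset.univ) => by rw [hJent r q]]
    simp [mul_ite]
  have eW : ∀ a b, (Nᴴ * jm * N) a b
      = (starRingEnd ℂ) (M a) * M b
        - M (Sum.swap a) * (starRingEnd ℂ) (M (Sum.swap b)) := by
    intro a b
    simp only [Matrix.mul_apply, Matrix.conjTranspose_apply, Fintype.sum_sum_type,
      Fin.sum_univ_one, hjm]
    simp only [Matrix.fromBlocks_apply₁₁, Matrix.fromBlocks_apply₁₂,
      Matrix.fromBlocks_apply₂₁, Matrix.fromBlocks_apply₂₂, Matrix.one_apply_eq,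
      Matrix.zero_apply, Matrix.neg_apply, hN0, hN1, starRingEnd_apply, star_star]
    ring
  have eW' : ∀ a b, (Nᴴ * d * N) a b = (starRingEnd ℂ) (M a) * M b := by
    intro a b
    simp only [Matrix.mul_apply, Matrix.conjTranspose_apply, Fintype.sum_sum_type,
      Fin.sum_univ_one, hd]
    simp only [Matrix.fromBlocks_apply₁₁, Matrix.fromBlocks_apply₁₂,
      Matrix.fromBlocks_apply₂₁, Matrix.fromBlocks_apply₂₂, Matrix.one_apply_eq,
      Matrix.zero_apply, Matrix.neg_apply, hN0, hN1, starRingEnd_apply]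
    ring
  have lemU : ∀ q, ∑ r, M r * (eps r * P r q) = uu q := by
    intro q
    rw [huu]
    exact Finset.sum_congr rfl fun r _ => by ring
  have lemA : ∀ q, ∑ j, P (Sum.swap q) j * (eps j * M (Sum.swap j)) = -uu q := by
    intro q
    rw [← sum_swap_reindexA (fun j => P (Sum.swap q) j * (eps j * M (Sum.swap j))), huu,
      ← Finset.sum_neg_distrib]
    refine Finset.sum_congr rfl fun j _ => ?_
    rw [hPd, hPh, Sum.swap_swap, eps_swap]
    ring
  have lemB : ∀ q, ∑ i, P i q * (eps (Sum.swap i) * M i) = -uu q := by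
    intro q
    rw [huu, ← Finset.sum_neg_distrib]
    refine Finset.sum_congr rfl fun i _ => ?_
    rw [eps_swap]
    ring
  have lemC : ∀ p, ∑ j, P (Sum.swap p) j * (eps j * (starRingEnd ℂ) (M j))
      = (starRingEnd ℂ) (uu (Sum.swap p)) := by
    intro p
    rw [huu]
    simp only [map_sum]
    refine Finset.sum_congr rfl fun j _ => ?_
    rw [_root_.map_mul, _root_.map_mul, eps_conj, hPh]
  have lemD : ∀ p, ∑ i, P i p * (eps (Sum.swap i) * (starRingEnd ℂ) (M (Sum.swap i)))
      = (starRingEnd ℂ) (uu (Sum.swap p)) := by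
    intro p
    rw [← sum_swap_reindexA
      (fun i => P i p * (eps (Sum.swap i) * (starRingEnd ℂ) (M (Sum.swap i)))), huu]
    simp only [map_sum, Sum.swap_swap]
    refine Finset.sum_congr rfl fun i _ => ?_
    rw [_root_.map_mul, _root_.map_mul, eps_conj]
    have : P (Sum.swap i) p = (starRingEnd ℂ) (P i (Sum.swap p)) := by
      rw [← hPd]
      rw [Sum.swap_swap]
    rw [this]
  have lemE : ∀ q, ∑ r, (starRingEnd ℂ) (M (Sum.swap r)) * (eps r * P r q)
      = -(starRingEnd ℂ) (uu (Sum.swap q)) := by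
    intro q
    rw [← sum_swap_reindexA
      (fun r => (starRingEnd ℂ) (M (Sum.swap r)) * (eps r * P r q)), huu]
    simp only [map_sum, Sum.swap_swap, ← Finset.sum_neg_distrib]
    refine Finset.sum_congr rfl fun r _ => ?_
    rw [_root_.map_mul, _root_.map_mul, eps_conj, eps_swap]
    have : P (Sum.swap r) q = (starRingEnd ℂ) (P r (Sum.swap q)) := by
      rw [← hPd, Sum.swap_swap]
    rw [this]
    ring
  have hSent : ∀ p q, (Nᴴ * jm * N * J * P + P * J * Nᴴ * jm * N) (Sum.swap p) q
      = (starRingEnd ℂ) (M (Sum.swap p)) * uu q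
        + M p * (starRingEnd ℂ) (uu (Sum.swap q))
        + M q * (starRingEnd ℂ) (uu (Sum.swap p))
        + (starRingEnd ℂ) (M (Sum.swap q)) * uu p := by
    intro p q
    have e1 : (Nᴴ * jm * N * J * P) (Sum.swap p) q
        = (starRingEnd ℂ) (M (Sum.swap p)) * uu q
          + M p * (starRingEnd ℂ) (uu (Sum.swap q)) := by
      rw [Matrix.mul_apply]
      calc ∑ r, (Nᴴ * jm * N * J) (Sum.swap p) r * P r q
          = ∑ r, ((starRingEnd ℂ) (M (Sum.swap p)) * (M r * (eps r * P r q))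
              - M p * ((starRingEnd ℂ) (M (Sum.swap r)) * (eps r * P r q))) := by
            refine Finset.sum_congr rfl fun r _ => ?_
            rw [mulJ, eW, Sum.swap_swap]
            ring
        _ = (starRingEnd ℂ) (M (Sum.swap p)) * (∑ r, M r * (eps r * P r q))
              - M p * (∑ r, (starRingEnd ℂ) (M (Sum.swap r)) * (eps r * P r q)) := by
            rw [Finset.sum_sub_distrib, Finset.mul_sum, Finset.mul_sum]
        _ = _ := by rw [lemU, lemE]; ring
    have assoc2 : P * J * Nᴴ * jm * N = (P * J) * (Nᴴ * jm * N) := by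
      simp only [Matrix.mul_assoc]
    have e2 : (P * J * Nᴴ * jm * N) (Sum.swap p) q
        = M q * (starRingEnd ℂ) (uu (Sum.swap p))
          + (starRingEnd ℂ) (M (Sum.swap q)) * uu p := by
      rw [assoc2, Matrix.mul_apply]
      calc ∑ r, (P * J) (Sum.swap p) r * (Nᴴ * jm * N) r q
          = ∑ r, (M q * (P (Sum.swap p) r * (eps r * (starRingEnd ℂ) (M r)))
              - (starRingEnd ℂ) (M (Sum.swap q))
                  * (P (Sum.swap p) r * (eps r * M (Sum.swap r)))) := by
            refine Finset.sum_congr rfl fun r _ => ?_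
            rw [mulJ, eW]
            ring
        _ = M q * (∑ r, P (Sum.swap p) r * (eps r * (starRingEnd ℂ) (M r)))
              - (starRingEnd ℂ) (M (Sum.swap q))
                  * (∑ r, P (Sum.swap p) r * (eps r * M (Sum.swap r))) := by
            rw [Finset.sum_sub_distrib, Finset.mul_sum, Finset.mul_sum]
        _ = _ := by rw [lemC, lemA]; ring
    rw [Matrix.add_apply, e1, e2]
    ring
  have pull : ∀ (f g : Fin n ⊕ Fin n → ℂ),
      ∑ j, f j * ((1/2:ℂ) * g j) = (1/2:ℂ) * ∑ j, f j * g j := by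
    intro f g
    rw [Finset.mul_sum]
    exact Finset.sum_congr rfl fun j _ => by ring
  rw [expand, assemble x M L (star L) P,
      to_bilin_left x
        (fun q => (∑ j, P (Sum.swap q) j * ((1/2:ℂ) * (eps j * M (Sum.swap j))))
          + ∑ i, P i q * ((1/2:ℂ) * (eps (Sum.swap i) * M i)))
        (fun p => (starRingEnd ℂ) (M (Sum.swap p))) (star L) hLsx,
      to_bilin_right x
        (fun p => (∑ j, P (Sum.swap p) j * ((1/2:ℂ) * (eps j * (starRingEnd ℂ) (M j))))
          + ∑ i, P i p * ((1/2:ℂ) * (eps (Sum.swap i) * (starRingEnd ℂ) (M (Sum.swap i)))))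
        M L hLx,
      hQS]
  have pushhalf : (1/2:ℂ) • (∑ p, ∑ q,
      (Nᴴ * jm * N * J * P + P * J * Nᴴ * jm * N) (Sum.swap p) q • (x p * x q))
      = ∑ p, ∑ q, ((1/2:ℂ) * (Nᴴ * jm * N * J * P + P * J * Nᴴ * jm * N) (Sum.swap p) q) •
          (x p * x q) := by
    rw [Finset.smul_sum]
    exact Finset.sum_congr rfl fun p _ => by
      rw [Finset.smul_sum]
      exact Finset.sum_congr rfl fun q _ => smul_smul _ _ _
  rw [show (1 / 2 : ℂ) = (1/2 : ℂ) from rfl, pushhalf]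
  refine eq_sub_of_add_eq ?_
  rw [merge3 (fun p q => x p * x q)
      (fun p q => (starRingEnd ℂ) (M (Sum.swap p)) *
        ((∑ j, P (Sum.swap q) j * ((1/2:ℂ) * (eps j * M (Sum.swap j))))
          + ∑ i, P i q * ((1/2:ℂ) * (eps (Sum.swap i) * M i))))
      (fun p q => ((∑ j, P (Sum.swap p) j * ((1/2:ℂ) * (eps j * (starRingEnd ℂ) (M j))))
          + ∑ i, P i p * ((1/2:ℂ) * (eps (Sum.swap i) * (starRingEnd ℂ) (M (Sum.swap i))))) * M q)
      (fun p q => (1/2:ℂ) * (Nᴴ * jm * N * J * P + P * J * Nᴴ * jm * N) (Sum.swap p) q)]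
  have coefEq : ∀ p q : Fin n ⊕ Fin n,
      ((starRingEnd ℂ) (M (Sum.swap p)) *
        ((∑ j, P (Sum.swap q) j * ((1/2:ℂ) * (eps j * M (Sum.swap j))))
          + ∑ i, P i q * ((1/2:ℂ) * (eps (Sum.swap i) * M i)))
        - ((∑ j, P (Sum.swap p) j * ((1/2:ℂ) * (eps j * (starRingEnd ℂ) (M j))))
          + ∑ i, P i p * ((1/2:ℂ) * (eps (Sum.swap i) * (starRingEnd ℂ) (M (Sum.swap i))))) * M q
        + (1/2:ℂ) * (Nᴴ * jm * N * J * P + P * J * Nᴴ * jm * N) (Sum.swap p) q)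
      = (1/2:ℂ) * (-((starRingEnd ℂ) (M (Sum.swap p)) * uu q)
          - M q * (starRingEnd ℂ) (uu (Sum.swap p))
          + M p * (starRingEnd ℂ) (uu (Sum.swap q))
          + (starRingEnd ℂ) (M (Sum.swap q)) * uu p) := by
    intro p q
    rw [pull (fun j => P (Sum.swap q) j) (fun j => eps j * M (Sum.swap j)),
        pull (fun i => P i q) (fun i => eps (Sum.swap i) * M i),
        pull (fun j => P (Sum.swap p) j) (fun j => eps j * (starRingEnd ℂ) (M j)),
        pull (fun i => P i p) (fun i => eps (Sum.swap i) * (starRingEnd ℂ) (M (Sum.swap i))),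
        lemA, lemB, lemC, lemD, hSent]
    ring
  rw [Finset.sum_congr rfl fun p _ => Finset.sum_congr rfl fun q _ => by rw [coefEq p q]]
  rw [F_antisym x comm _ (fun p q => by ring)]
  congr 1
  -- trace evaluation
  have hconj_uu : ∀ p, (starRingEnd ℂ) (uu p) = ∑ r, P p r * (eps r * (starRingEnd ℂ) (M r)) := by
    intro p
    rw [huu]
    simp only [map_sum]
    exact Finset.sum_congr rfl fun r _ => by rw [_root_.map_mul, _root_.map_mul, eps_conj, hPh]
  have hTr : (P * J * Nᴴ * d * N * J).trace = ∑ p, eps p * (M p * (starRingEnd ℂ) (uu p)) := by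
    have assoc3 : P * J * Nᴴ * d * N * J = (P * J) * ((Nᴴ * d * N) * J) := by
      rw [Matrix.mul_assoc (P * J) Nᴴ d, Matrix.mul_assoc (P * J) (Nᴴ * d) N,
        Matrix.mul_assoc (P * J) (Nᴴ * d * N) J]
    rw [assoc3, Matrix.trace]
    refine Finset.sum_congr rfl fun p _ => ?_
    rw [Matrix.diag_apply, Matrix.mul_apply, hconj_uu, Finset.mul_sum, Finset.mul_sum]
    refine Finset.sum_congr rfl fun r _ => ?_
    rw [mulJ, mulJ, eW']
    ring
  rw [hTr]
  have step1 : ∀ p : Fin n ⊕ Fin n, ∑ q, ((1/2:ℂ) * (-((starRingEnd ℂ) (M (Sum.swap p)) * uu q)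
      - M q * (starRingEnd ℂ) (uu (Sum.swap p))
      + M p * (starRingEnd ℂ) (uu (Sum.swap q))
      + (starRingEnd ℂ) (M (Sum.swap q)) * uu p)) * Th p q
      = eps p * ((1/2:ℂ) * (-((starRingEnd ℂ) (M (Sum.swap p)) * uu (Sum.swap p))
          - M (Sum.swap p) * (starRingEnd ℂ) (uu (Sum.swap p))
          + M p * (starRingEnd ℂ) (uu p)
          + (starRingEnd ℂ) (M p) * uu p)) := by
    intro p
    rw [sum_mul_Th (fun q => (1/2:ℂ) * (-((starRingEnd ℂ) (M (Sum.swap p)) * uu q)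
      - M q * (starRingEnd ℂ) (uu (Sum.swap p))
      + M p * (starRingEnd ℂ) (uu (Sum.swap q))
      + (starRingEnd ℂ) (M (Sum.swap q)) * uu p)) p]
    rw [Sum.swap_swap]
  rw [Finset.sum_congr rfl fun p _ => step1 p]
  have reidx1 : ∑ p, eps p * ((starRingEnd ℂ) (M (Sum.swap p)) * uu (Sum.swap p))
      = -∑ p, eps p * ((starRingEnd ℂ) (M p) * uu p) := by
    rw [← sum_swap_reindexA (fun p => eps p * ((starRingEnd ℂ) (M (Sum.swap p)) * uu (Sum.swap p))),
      ← Finset.sum_neg_distrib]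
    refine Finset.sum_congr rfl fun p _ => ?_
    rw [eps_swap, Sum.swap_swap]
    ring
  have reidx2 : ∑ p, eps p * (M (Sum.swap p) * (starRingEnd ℂ) (uu (Sum.swap p)))
      = -∑ p, eps p * (M p * (starRingEnd ℂ) (uu p)) := by
    rw [← sum_swap_reindexA
      (fun p => eps p * (M (Sum.swap p) * (starRingEnd ℂ) (uu (Sum.swap p)))),
      ← Finset.sum_neg_distrib]
    refine Finset.sum_congr rfl fun p _ => ?_
    rw [eps_swap, Sum.swap_swap]
    ring
  have hreal : ∑ p, eps p * ((starRingEnd ℂ) (M p) * uu p)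
      = ∑ p, eps p * (M p * (starRingEnd ℂ) (uu p)) := by
    have lhs_eq : ∑ p, eps p * ((starRingEnd ℂ) (M p) * uu p)
        = ∑ p, ∑ r, eps p * (starRingEnd ℂ) (M p) * (P r p * (eps r * M r)) := by
      refine Finset.sum_congr rfl fun p _ => ?_
      rw [huu]
      rw [Finset.mul_sum, Finset.mul_sum]
      exact Finset.sum_congr rfl fun r _ => by ring
    have rhs_eq : ∑ p, eps p * (M p * (starRingEnd ℂ) (uu p))
        = ∑ p, ∑ r, eps p * M p * (P p r * (eps r * (starRingEnd ℂ) (M r))) := by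
      refine Finset.sum_congr rfl fun p _ => ?_
      rw [hconj_uu, Finset.mul_sum, Finset.mul_sum]
      exact Finset.sum_congr rfl fun r _ => by ring
    rw [lhs_eq, rhs_eq, Finset.sum_comm]
    exact Finset.sum_congr rfl fun p _ => Finset.sum_congr rfl fun r _ => by ring
  calc (1/2:ℂ) * ∑ p, eps p * ((1/2:ℂ) * (-((starRingEnd ℂ) (M (Sum.swap p)) * uu (Sum.swap p))
          - M (Sum.swap p) * (starRingEnd ℂ) (uu (Sum.swap p))
          + M p * (starRingEnd ℂ) (uu p)
          + (starRingEnd ℂ) (M p) * uu p))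
      = (1/2:ℂ) * ((1/2:ℂ) * (-(∑ p, eps p * ((starRingEnd ℂ) (M (Sum.swap p)) * uu (Sum.swap p)))
          - (∑ p, eps p * (M (Sum.swap p) * (starRingEnd ℂ) (uu (Sum.swap p))))
          + (∑ p, eps p * (M p * (starRingEnd ℂ) (uu p)))
          + ∑ p, eps p * ((starRingEnd ℂ) (M p) * uu p))) := by
        congr 1
        rw [← Finset.sum_neg_distrib, ← Finset.sum_sub_distrib, ← Finset.sum_add_distrib,
          ← Finset.sum_add_distrib, Finset.mul_sum]
        exact Finset.sum_congr rfl fun p _ => by ring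
      _ = _ := by
        rw [reidx1, reidx2, hreal]
        ring
end

section
/- Let A be a unital star algebra over ℂ and a : Fin n → A satisfy the canonical commutation relations aᵢ·aⱼ = aⱼ·aᵢ and aᵢ·(aⱼ)* − (aⱼ)*·aᵢ = δᵢⱼ·1. Let x = (a, a#) be the doubled vector. Let M be a 2n×2n Hermitian matrix of doubled form, P a 2n×2n Hermitian matrix of doubled form, N₁,N₂ ∈ ℂ^{1×n} with L = [N₁ N₂]·x and N = [[N₁,N₂],[N₂#,N₁#]], and E a 2m×2n complex matrix with zᵢ = Σₖ Eᵢₖ·x(k). Set H₁ = (1/2)·x†Mx, V = x†Px, J = diag(I,−I) (2n×2n), j = diag(1,−1) (2×2), ℒ(X) = (1/2)·L*·(X·L − L·X) + (1/2)·(L*·X − X·L*)·L, and A₀ = −i·J·M − (1/2)·J·N†·j·N. Then for each i: −i·[zᵢ, H₁] + ℒ(zᵢ) = (E·A₀·x)ᵢ and i·[zᵢ, V] = (2i·E·J·P·x)ᵢ, where (F·x)ᵢ = Σₖ Fᵢₖ·x(k). -/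
open Matrix

section Aux
variable {A : Type*} [Ring A] [Algebra ℂ A] {ι : Type*} [Fintype ι]
variable (x : ι → A) (c : ι → ι → ℂ)

lemma aux_comm_lin (hc : ∀ p q, x p * x q = x q * x p + c p q • (1 : A))
    (u : ι → ℂ) (k : ι) :
    x k * (∑ p, u p • x p) - (∑ p, u p • x p) * x k
      = (∑ p, c k p * u p) • (1 : A) := by
  rw [Finset.mul_sum, Finset.sum_mul, ← Finset.sum_sub_distrib, Finset.sum_smul]
  refine Finset.sum_congr rfl fun p _ => ?_
  rw [mul_smul_comm, smul_mul_assoc, ← smul_sub, hc k p, add_sub_cancel_left,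
    smul_smul, mul_comm]

lemma aux_comm_lin2 (hc : ∀ p q, x p * x q = x q * x p + c p q • (1 : A))
    (u v : ι → ℂ) :
    (∑ p, u p • x p) * (∑ p, v p • x p) - (∑ p, v p • x p) * (∑ p, u p • x p)
      = (∑ k, u k * ∑ p, c k p * v p) • (1 : A) := by
  rw [Finset.sum_mul, Finset.mul_sum, ← Finset.sum_sub_distrib, Finset.sum_smul]
  refine Finset.sum_congr rfl fun k _ => ?_
  rw [smul_mul_assoc, mul_smul_comm, ← smul_sub, aux_comm_lin x c hc v k, smul_smul]

lemma aux_comm_quad (hc : ∀ p q, x p * x q = x q * x p + c p q • (1 : A))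
    (W : ι → ι → ℂ) (k : ι) :
    x k * (∑ p, ∑ q, W p q • (x p * x q)) - (∑ p, ∑ q, W p q • (x p * x q)) * x k
      = ∑ q, ((∑ p, c k p * W p q) + (∑ p, c k p * W q p)) • x q := by
  have key : ∀ p q, x k * (x p * x q) - (x p * x q) * x k
      = c k p • x q + c k q • x p := by
    intro p q
    have : x k * (x p * x q) = x p * x q * x k + (c k p • x q + c k q • x p) := by
      rw [← mul_assoc, hc k p, add_mul, smul_mul_assoc, one_mul, mul_assoc,
        hc k q, mul_add, mul_smul_comm, mul_one, ← mul_assoc]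
      abel
    rw [this, add_sub_cancel_left]
  have expand : x k * (∑ p, ∑ q, W p q • (x p * x q))
      - (∑ p, ∑ q, W p q • (x p * x q)) * x k
      = ∑ p, ∑ q, ((W p q * c k p) • x q + (W p q * c k q) • x p) := by
    rw [Finset.mul_sum, Finset.sum_mul, ← Finset.sum_sub_distrib]
    refine Finset.sum_congr rfl fun p _ => ?_
    rw [Finset.mul_sum, Finset.sum_mul, ← Finset.sum_sub_distrib]
    refine Finset.sum_congr rfl fun q _ => ?_
    rw [mul_smul_comm, smul_mul_assoc, ← smul_sub, key p q, smul_add,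
      smul_smul, smul_smul]
  rw [expand]
  have split : ∑ p, ∑ q, ((W p q * c k p) • x q + (W p q * c k q) • x p)
      = (∑ p, ∑ q, (W p q * c k p) • x q) + (∑ p, ∑ q, (W p q * c k q) • x p) := by
    simp [Finset.sum_add_distrib]
  rw [split]
  have h1 : (∑ p, ∑ q, (W p q * c k p) • x q)
      = ∑ q, (∑ p, c k p * W p q) • x q := by
    rw [Finset.sum_comm]
    refine Finset.sum_congr rfl fun q _ => ?_
    rw [Finset.sum_smul]
    exact Finset.sum_congr rfl fun p _ => by rw [mul_comm]
  have h2 : (∑ p, ∑ q, (W p q * c k q) • x p)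
      = ∑ q, (∑ p, c k p * W q p) • x q := by
    refine Finset.sum_congr rfl fun p _ => ?_
    rw [Finset.sum_smul]
    exact Finset.sum_congr rfl fun q _ => by rw [mul_comm]
  rw [h1, h2, ← Finset.sum_add_distrib]
  exact Finset.sum_congr rfl fun q _ => by rw [← add_smul]

lemma aux_swap_smul {κ : Type*} [Fintype κ] (y : κ → A) (s : ι → κ → ℂ) :
    ∑ k : ι, ∑ q : κ, s k q • y q = ∑ q, (∑ k, s k q) • y q := by
  rw [Finset.sum_comm]
  exact Finset.sum_congr rfl fun q _ => (Finset.sum_smul).symm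

end Aux

lemma aux_doubled_entry {n : ℕ} (M₁ M₂ : Matrix (Fin n) (Fin n) ℂ)
    (hM₁ : M₁.IsHermitian) (hM₂ : M₂ = M₂ᵀ) (k q : Fin n ⊕ Fin n) :
    (∑ p, (Matrix.fromBlocks 0 1 (-1) 0 : Matrix (Fin n ⊕ Fin n) (Fin n ⊕ Fin n) ℂ) k p *
        (Matrix.fromBlocks M₁ M₂ (M₂.map (starRingEnd ℂ)) (M₁.map (starRingEnd ℂ))) (Sum.swap p) q)
    + (∑ p, (Matrix.fromBlocks 0 1 (-1) 0 : Matrix (Fin n ⊕ Fin n) (Fin n ⊕ Fin n) ℂ) k p *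
        (Matrix.fromBlocks M₁ M₂ (M₂.map (starRingEnd ℂ)) (M₁.map (starRingEnd ℂ))) (Sum.swap q) p)
    = 2 * (((Matrix.fromBlocks 1 0 0 (-1) : Matrix (Fin n ⊕ Fin n) (Fin n ⊕ Fin n) ℂ) *
        (Matrix.fromBlocks M₁ M₂ (M₂.map (starRingEnd ℂ)) (M₁.map (starRingEnd ℂ)))) k q) := by
  have hM₁' : ∀ i j, (starRingEnd ℂ) (M₁ j i) = M₁ i j := by
    intro i j
    conv_rhs => rw [← hM₁]
    simp [Matrix.conjTranspose_apply]
  have hM₂' : ∀ i j, M₂ j i = M₂ i j := by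
    intro i j
    conv_lhs => rw [hM₂]
    rfl
  rcases k with i | i <;> rcases q with j | j <;>
    simp [Matrix.mul_apply, Fintype.sum_sum_type, Matrix.one_apply, Matrix.map_apply,
      mul_ite, ite_mul, mul_zero, zero_mul, mul_one, one_mul, Finset.sum_ite_eq,
      Finset.sum_ite_eq', hM₁', hM₂'] <;> ring

lemma aux_N_entry {n : ℕ} (N₁ N₂ : Matrix (Fin 1) (Fin n) ℂ) (k q : Fin n ⊕ Fin n) :
    (∑ p, (Matrix.fromBlocks 0 1 (-1) 0 : Matrix (Fin n ⊕ Fin n) (Fin n ⊕ Fin n) ℂ) k p *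
        (Matrix.fromBlocks N₁ N₂ (N₂.map (starRingEnd ℂ)) (N₁.map (starRingEnd ℂ))) (Sum.inl 0) p) *
      (Matrix.fromBlocks N₁ N₂ (N₂.map (starRingEnd ℂ)) (N₁.map (starRingEnd ℂ))) (Sum.inr 0) q
    + (∑ p, (Matrix.fromBlocks N₁ N₂ (N₂.map (starRingEnd ℂ)) (N₁.map (starRingEnd ℂ))) (Sum.inr 0) p *
        (Matrix.fromBlocks 0 1 (-1) 0 : Matrix (Fin n ⊕ Fin n) (Fin n ⊕ Fin n) ℂ) p k) *
      (Matrix.fromBlocks N₁ N₂ (N₂.map (starRingEnd ℂ)) (N₁.map (starRingEnd ℂ))) (Sum.inl 0) q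
    = -(((Matrix.fromBlocks 1 0 0 (-1) : Matrix (Fin n ⊕ Fin n) (Fin n ⊕ Fin n) ℂ) *
        (Matrix.fromBlocks N₁ N₂ (N₂.map (starRingEnd ℂ)) (N₁.map (starRingEnd ℂ)))ᴴ *
        (Matrix.fromBlocks 1 0 0 (-1) : Matrix (Fin 1 ⊕ Fin 1) (Fin 1 ⊕ Fin 1) ℂ) *
        (Matrix.fromBlocks N₁ N₂ (N₂.map (starRingEnd ℂ)) (N₁.map (starRingEnd ℂ)))) k q) := by
  rcases k with i | i <;> rcases q with j | j <;>
    simp [Matrix.mul_apply, Fintype.sum_sum_type, Matrix.one_apply, Matrix.map_apply,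
      Matrix.conjTranspose_apply, mul_ite, ite_mul, mul_zero, zero_mul, mul_one, one_mul,
      Finset.sum_ite_eq, Finset.sum_ite_eq', Fin.sum_univ_one] <;> ring_nf

/-- Lemma 6 of the paper: for the linear quantum system with quadratic nominal
Hamiltonian `H₁ = (1/2)·x†Mx`, quadratic Lyapunov operator `V = x†Px`, linear
coupling `L = [N₁ N₂]·x` and linear `z = E·x`, one has the drift identities
`−i[zᵢ, H₁] + ℒ(zᵢ) = (E·A₀·x)ᵢ` with `A₀ = −i·J·M − (1/2)·J·N†·j·N`, and
`i[zᵢ, V] = (2i·E·J·P·x)ᵢ`. -/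
theorem linear_drift_identities {A : Type*} [Ring A] [StarRing A]
    [Algebra ℂ A] [StarModule ℂ A] {n m : ℕ}
    (a : Fin n → A)
    (hcomm : ∀ i j, a i * a j = a j * a i)
    (hccr : ∀ i j, a i * star (a j) - star (a j) * a i
        = if i = j then (1 : A) else 0)
    (x : (Fin n ⊕ Fin n) → A)
    (hxl : ∀ i, x (Sum.inl i) = a i)
    (hxr : ∀ i, x (Sum.inr i) = star (a i))
    (M₁ M₂ P₁ P₂ : Matrix (Fin n) (Fin n) ℂ)
    (hM₁ : M₁.IsHermitian) (hM₂ : M₂ = M₂ᵀ)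
    (hP₁ : P₁.IsHermitian) (hP₂ : P₂ = P₂ᵀ)
    (M P J : Matrix (Fin n ⊕ Fin n) (Fin n ⊕ Fin n) ℂ)
    (hM : M = Matrix.fromBlocks M₁ M₂ (M₂.map (starRingEnd ℂ)) (M₁.map (starRingEnd ℂ)))
    (hP : P = Matrix.fromBlocks P₁ P₂ (P₂.map (starRingEnd ℂ)) (P₁.map (starRingEnd ℂ)))
    (hJ : J = Matrix.fromBlocks 1 0 0 (-1))
    (N₁ N₂ : Matrix (Fin 1) (Fin n) ℂ)
    (L : A)
    (hL : L = (∑ k, N₁ 0 k • a k) + ∑ k, N₂ 0 k • star (a k))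
    (N : Matrix (Fin 1 ⊕ Fin 1) (Fin n ⊕ Fin n) ℂ)
    (hN : N = Matrix.fromBlocks N₁ N₂ (N₂.map (starRingEnd ℂ)) (N₁.map (starRingEnd ℂ)))
    (jm : Matrix (Fin 1 ⊕ Fin 1) (Fin 1 ⊕ Fin 1) ℂ)
    (hjm : jm = Matrix.fromBlocks 1 0 0 (-1))
    (E : Matrix (Fin (2 * m)) (Fin n ⊕ Fin n) ℂ)
    (z : Fin (2 * m) → A) (hz : ∀ i, z i = ∑ k, E i k • x k)
    (ℒ : A → A)
    (hℒ : ∀ X : A, ℒ X = (1 / 2 : ℂ) • (star L * (X * L - L * X)) +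
        (1 / 2 : ℂ) • ((star L * X - X * star L) * L))
    (H₁ V : A)
    (hH₁ : H₁ = (1 / 2 : ℂ) • ∑ i, ∑ j, star (x i) * (M i j • x j))
    (hV : V = ∑ i, ∑ j, star (x i) * (P i j • x j))
    (A₀ : Matrix (Fin n ⊕ Fin n) (Fin n ⊕ Fin n) ℂ)
    (hA₀ : A₀ = (-Complex.I) • (J * M) - (1 / 2 : ℂ) • (J * Nᴴ * jm * N)) :
    (∀ i, (-Complex.I) • (z i * H₁ - H₁ * z i) + ℒ (z i)
        = ∑ k, (E * A₀) i k • x k) ∧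
    (∀ i, Complex.I • (z i * V - V * z i)
        = ∑ k, ((2 * Complex.I) • (E * J * P)) i k • x k) := by
  classical
  set c : Matrix (Fin n ⊕ Fin n) (Fin n ⊕ Fin n) ℂ := Matrix.fromBlocks 0 1 (-1) 0 with hcdef
  -- the CCR in doubled form
  have hc : ∀ p q, x p * x q = x q * x p + c p q • (1 : A) := by
    rintro (i | i) (j | j)
    · rw [hxl, hxl, hcomm i j]
      simp [hcdef]
    · rw [hxl, hxr]
      have h := hccr i j
      rw [sub_eq_iff_eq_add] at h
      rw [h]
      by_cases hij : i = j <;> simp [hcdef, Matrix.one_apply, hij] <;> abel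
    · rw [hxr, hxl]
      have h := hccr j i
      rw [sub_eq_iff_eq_add] at h
      rw [h]
      by_cases hij : i = j <;>
        simp [hcdef, Matrix.one_apply, hij, eq_comm] <;> abel
    · rw [hxr, hxr]
      have h := congrArg star (hcomm j i)
      rw [StarMul.star_mul, StarMul.star_mul] at h
      rw [h]
      simp [hcdef]
  have hstarx : ∀ p, star (x p) = x (Sum.swap p) := by
    rintro (i | i)
    · simp [hxl, hxr]
    · simp [hxl, hxr]
  -- H₁ and V as quadratic forms in x
  have hquadform : ∀ (W : Matrix (Fin n ⊕ Fin n) (Fin n ⊕ Fin n) ℂ),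
      (∑ p, ∑ q, star (x p) * (W p q • x q))
        = ∑ p, ∑ q, W (Sum.swap p) q • (x p * x q) := by
    intro W
    have h1 : (∑ p, ∑ q, star (x p) * (W p q • x q))
        = ∑ p, ∑ q, W p q • (x (Sum.swap p) * x q) := by
      refine Finset.sum_congr rfl fun p _ => Finset.sum_congr rfl fun q _ => ?_
      rw [hstarx p, mul_smul_comm]
    rw [h1]
    exact Fintype.sum_equiv (Equiv.sumComm (Fin n) (Fin n)) _ _
      (fun p => by simp)
  -- commutator with a quadratic doubled Hermitian form
  have hquadcomm : ∀ (Q₁ Q₂ : Matrix (Fin n) (Fin n) ℂ), Q₁.IsHermitian → Q₂ = Q₂ᵀ →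
      ∀ k, x k * (∑ p, ∑ q, star (x p) *
          ((Matrix.fromBlocks Q₁ Q₂ (Q₂.map (starRingEnd ℂ)) (Q₁.map (starRingEnd ℂ))) p q • x q))
        - (∑ p, ∑ q, star (x p) *
          ((Matrix.fromBlocks Q₁ Q₂ (Q₂.map (starRingEnd ℂ)) (Q₁.map (starRingEnd ℂ))) p q • x q)) * x k
        = ∑ q, (2 * (((Matrix.fromBlocks 1 0 0 (-1) : Matrix (Fin n ⊕ Fin n) (Fin n ⊕ Fin n) ℂ) *
            (Matrix.fromBlocks Q₁ Q₂ (Q₂.map (starRingEnd ℂ)) (Q₁.map (starRingEnd ℂ)))) k q)) • x q := by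
    intro Q₁ Q₂ hQ₁ hQ₂ k
    rw [hquadform]
    rw [aux_comm_quad x (fun p q => c p q) hc
      (fun p q => (Matrix.fromBlocks Q₁ Q₂ (Q₂.map (starRingEnd ℂ)) (Q₁.map (starRingEnd ℂ))) (Sum.swap p) q) k]
    refine Finset.sum_congr rfl fun q _ => ?_
    congr 1
    exact aux_doubled_entry Q₁ Q₂ hQ₁ hQ₂ k q
  -- commutators of x k with H₁ and V
  have hcommH : ∀ k, x k * H₁ - H₁ * x k = ∑ q, (J * M) k q • x q := by
    intro k
    rw [hH₁, mul_smul_comm, smul_mul_assoc, ← smul_sub, hM,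
      hquadcomm M₁ M₂ hM₁ hM₂ k, Finset.smul_sum]
    refine Finset.sum_congr rfl fun q _ => ?_
    rw [smul_smul]
    congr 1
    rw [hJ]
    ring
  have hcommV : ∀ k, x k * V - V * x k = ∑ q, (2 * (J * P) k q) • x q := by
    intro k
    rw [hV, hP, hquadcomm P₁ P₂ hP₁ hP₂ k]
    refine Finset.sum_congr rfl fun q _ => ?_
    congr 2
    rw [hJ]
  -- commutators of z i
  have hzH : ∀ i, z i * H₁ - H₁ * z i
      = ∑ q, (∑ k, E i k * (J * M) k q) • x q := by
    intro i
    rw [hz i, Finset.sum_mul, Finset.mul_sum, ← Finset.sum_sub_distrib,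
      ← aux_swap_smul x (fun k q => E i k * (J * M) k q)]
    refine Finset.sum_congr rfl fun k _ => ?_
    rw [smul_mul_assoc, mul_smul_comm, ← smul_sub, hcommH k, Finset.smul_sum]
    exact Finset.sum_congr rfl fun q _ => by rw [smul_smul]
  have hzV : ∀ i, z i * V - V * z i
      = ∑ q, (∑ k, E i k * (2 * (J * P) k q)) • x q := by
    intro i
    rw [hz i, Finset.sum_mul, Finset.mul_sum, ← Finset.sum_sub_distrib,
      ← aux_swap_smul x (fun k q => E i k * (2 * (J * P) k q))]
    refine Finset.sum_congr rfl fun k _ => ?_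
    rw [smul_mul_assoc, mul_smul_comm, ← smul_sub, hcommV k, Finset.smul_sum]
    exact Finset.sum_congr rfl fun q _ => by rw [smul_smul]
  -- L and star L as linear forms
  have hLν : L = ∑ p, N (Sum.inl 0) p • x p := by
    rw [hL, hN, Fintype.sum_sum_type]
    simp [hxl, hxr]
  have hLμ : star L = ∑ p, N (Sum.inr 0) p • x p := by
    rw [hL, hN]
    simp only [star_add, star_sum, star_smul, star_star, Fintype.sum_sum_type,
      Matrix.fromBlocks_apply₂₁, Matrix.fromBlocks_apply₂₂, Matrix.map_apply, hxl, hxr]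
    rw [add_comm]
    simp only [starRingEnd_apply]
  -- ℒ applied to z i
  have hLz : ∀ i, ℒ (z i)
      = ∑ q, ((1/2 : ℂ) * ((∑ k, E i k * ∑ p, c k p * N (Sum.inl 0) p) * N (Sum.inr 0) q)
        + (1/2 : ℂ) * ((∑ k, N (Sum.inr 0) k * ∑ p, c k p * E i p) * N (Sum.inl 0) q)) • x q := by
    intro i
    rw [hℒ]
    have h1 : z i * L - L * z i
        = (∑ k, E i k * ∑ p, c k p * N (Sum.inl 0) p) • (1 : A) := by
      rw [hz i, hLν]
      exact aux_comm_lin2 x (fun p q => c p q) hc _ _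
    have h2 : star L * z i - z i * star L
        = (∑ k, N (Sum.inr 0) k * ∑ p, c k p * E i p) • (1 : A) := by
      rw [hz i, hLμ]
      exact aux_comm_lin2 x (fun p q => c p q) hc _ _
    rw [h1, h2, mul_smul_comm, mul_one, smul_mul_assoc, one_mul, hLμ, hLν,
      smul_smul, smul_smul, Finset.smul_sum, Finset.smul_sum, ← Finset.sum_add_distrib]
    refine Finset.sum_congr rfl fun q _ => ?_
    rw [smul_smul, smul_smul, ← add_smul]
    congr 1
    ring
  constructor
  · intro i
    rw [hzH i, hLz i, Finset.smul_sum, ← Finset.sum_add_distrib]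
    refine Finset.sum_congr rfl fun q _ => ?_
    rw [smul_smul, ← add_smul]
    congr 1
    -- scalar identity
    have hNe := aux_N_entry N₁ N₂
    rw [← hN, ← hJ, ← hjm] at hNe
    have hβ₂ : (∑ k, N (Sum.inr 0) k * ∑ p, c k p * E i p)
        = ∑ k, E i k * (∑ p, N (Sum.inr 0) p * c p k) := by
      simp_rw [Finset.mul_sum]
      rw [Finset.sum_comm]
      exact Finset.sum_congr rfl fun k _ => Finset.sum_congr rfl fun p _ => by ring
    have key : ∀ k, A₀ k q = -Complex.I * (J * M) k q
        + ((1/2 : ℂ) * ((∑ p, c k p * N (Sum.inl 0) p) * N (Sum.inr 0) q)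
          + (1/2 : ℂ) * ((∑ p, N (Sum.inr 0) p * c p k) * N (Sum.inl 0) q)) := by
      intro k
      rw [hA₀]
      simp only [Matrix.sub_apply, Matrix.smul_apply, smul_eq_mul]
      linear_combination (-(1/2 : ℂ)) * hNe k q
    rw [Matrix.mul_apply]
    have hrhs : (∑ k, E i k * A₀ k q)
        = ∑ k, (E i k * (-Complex.I * (J * M) k q)
          + ((1/2 : ℂ) * ((E i k * ∑ p, c k p * N (Sum.inl 0) p) * N (Sum.inr 0) q)
            + (1/2 : ℂ) * ((E i k * ∑ p, N (Sum.inr 0) p * c p k) * N (Sum.inl 0) q))) := by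
      refine Finset.sum_congr rfl fun k _ => ?_
      rw [key k]
      ring
    rw [hrhs, hβ₂, Finset.mul_sum, Finset.sum_mul, Finset.sum_mul, Finset.mul_sum,
      Finset.mul_sum, ← Finset.sum_add_distrib, ← Finset.sum_add_distrib]
    exact Finset.sum_congr rfl fun k _ => by ring
  · intro i
    rw [hzV i]
    rw [Finset.smul_sum]
    refine Finset.sum_congr rfl fun q _ => ?_
    rw [smul_smul]
    congr 1
    rw [Matrix.smul_apply, smul_eq_mul, Matrix.mul_assoc, Matrix.mul_apply,
      Finset.mul_sum, Finset.mul_sum]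
    exact Finset.sum_congr rfl fun k _ => by ring
end

section
/- Define g : ℝ → ℂ by g(ω) = i/(iω − i + 1.05). Then for every ω ∈ ℝ, both 1/2 + Re(g(ω)) − 0.2·ω·Im(g(ω)) > 0 and 1/2 − Re(g(ω)) + 0.2·ω·Im(g(ω)) > 0. -/
/-- The optical parametric amplifier example of the paper with `κ = 2.1`:
for `g(ω) = G₁(iω) = i/(iω − i + 1.05)`, the two scalar Popov conditions with
`θ = 0.2` and `γ = 2` hold for all `ω ∈ ℝ`. -/
theorem opa_popov_conditions (g : ℝ → ℂ)
    (hg : ∀ ω : ℝ, g ω = Complex.I / (Complex.I * (ω : ℂ) - Complex.I + 1.05)) :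
    ∀ ω : ℝ,
      1 / 2 + (g ω).re - 0.2 * ω * (g ω).im > 0 ∧
      1 / 2 - (g ω).re + 0.2 * ω * (g ω).im > 0 := by
  intro ω
  have hD : (0:ℝ) < 1.05 ^ 2 + (ω - 1) ^ 2 := by positivity
  have h105 : (1.05 : ℂ) = Complex.ofReal 1.05 := by norm_num
  have hre : (g ω).re = (ω - 1) / (1.05 ^ 2 + (ω - 1) ^ 2) := by
    rw [hg ω, h105]
    simp [Complex.div_re, Complex.normSq_apply]
    rw [div_eq_div_iff (by nlinarith) (by nlinarith)]
    ring
  have him : (g ω).im = 1.05 / (1.05 ^ 2 + (ω - 1) ^ 2) := by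
    rw [hg ω, h105]
    simp [Complex.div_im, Complex.normSq_apply]
    rw [div_eq_div_iff (by nlinarith) (by nlinarith)]
    ring
  rw [hre, him]
  constructor
  · have h : 1 / 2 + (ω - 1) / (1.05 ^ 2 + (ω - 1) ^ 2)
        - 0.2 * ω * (1.05 / (1.05 ^ 2 + (ω - 1) ^ 2))
        = (ω ^ 2 - 0.42 * ω + 0.1025) / (2 * (1.05 ^ 2 + (ω - 1) ^ 2)) := by
      field_simp
      ring
    rw [gt_iff_lt, h]
    apply div_pos _ (by linarith)
    nlinarith [sq_nonneg (ω - 0.21)]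
  · have h : 1 / 2 - (ω - 1) / (1.05 ^ 2 + (ω - 1) ^ 2)
        + 0.2 * ω * (1.05 / (1.05 ^ 2 + (ω - 1) ^ 2))
        = (ω ^ 2 - 3.58 * ω + 4.1025) / (2 * (1.05 ^ 2 + (ω - 1) ^ 2)) := by
      field_simp
      ring
    rw [gt_iff_lt, h]
    apply div_pos _ (by linarith)
    nlinarith [sq_nonneg (ω - 1.79)]
end
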